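/- arXiv:2503.13219 — 4 statements merged into one kernel-verified Lean document; each statement's English description precedes it below -/
import Mathlib

section
/- Let γ: [0,T)×[-1,1] → ℝⁿ be a smooth family of immersions, φ = ⟨∂_tγ, ∂_sγ⟩, V = ∂_tγ − φ∂_sγ, and let N be a smooth vector field along γ with ⟨N, ∂_sγ⟩ ≡ 0. Then for all (t,x): (a) ∂_t|∂_xγ| = (∂_sφ − ⟨κ, V⟩)|∂_xγ|; (b) for every smooth f: [0,T)×[-1,1] → ℝᵈ one has ∂_t(∂_s f) − ∂_s(∂_t f) = (⟨κ, V⟩ − ∂_sφ)∂_s f; (c) ∂_t∂_sγ = ∂_s^⊥V + φκ; (d) ∂_tN = ∂_t^⊥N − ⟨∂_s^⊥V + φκ, N⟩∂_sγ; (e) ∂_t^⊥κ = (∂_s^⊥)²V + ⟨κ, V⟩κ + φ∂_s^⊥κ; (f) (∂_t^⊥∂_s^⊥ − ∂_s^⊥∂_t^⊥)N = (⟨κ, V⟩ − ∂_sφ)∂_s^⊥N + ⟨κ, N⟩∂_s^⊥V − ⟨∂_s^⊥V, N⟩κ. -/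
open Set MeasureTheory Filter
open scoped RealInnerProductSpace

noncomputable section

variable {n : ℕ}

/-- Arc-length derivative along the curve `g` of a field `f`. -/
def aderiv {F : Type*} [NormedAddCommGroup F] [NormedSpace ℝ F]
    (g : ℝ → EuclideanSpace ℝ (Fin n)) (f : ℝ → F) : ℝ → F :=
  fun x => ‖deriv g x‖⁻¹ • deriv f x

/-- Unit tangent `∂ₛγ`. -/
def utang (g : ℝ → EuclideanSpace ℝ (Fin n)) : ℝ → EuclideanSpace ℝ (Fin n) :=
  aderiv g g

/-- Normal projection along `g`. -/
def nperp (g f : ℝ → EuclideanSpace ℝ (Fin n)) : ℝ → EuclideanSpace ℝ (Fin n) :=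
  fun x => f x - ⟪f x, utang g x⟫ • utang g x

/-- Curvature vector `κ = ∂ₛ²γ`. -/
def curvV (g : ℝ → EuclideanSpace ℝ (Fin n)) : ℝ → EuclideanSpace ℝ (Fin n) :=
  aderiv g (utang g)

/-- Projected arc-length derivative `∂ₛ^⊥`. -/
def aderivP (g f : ℝ → EuclideanSpace ℝ (Fin n)) : ℝ → EuclideanSpace ℝ (Fin n) :=
  nperp g (aderiv g f)

/-- Iterated projected arc-length derivative `(∂ₛ^⊥)^k`. -/
def aderivPIter (g : ℝ → EuclideanSpace ℝ (Fin n)) :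
    ℕ → (ℝ → EuclideanSpace ℝ (Fin n)) → ℝ → EuclideanSpace ℝ (Fin n)
  | 0, f => f
  | k + 1, f => aderivP g (aderivPIter g k f)

/-- Iterated full arc-length derivative `∂ₛ^k`. -/
def aderivIter (g : ℝ → EuclideanSpace ℝ (Fin n)) :
    ℕ → (ℝ → EuclideanSpace ℝ (Fin n)) → ℝ → EuclideanSpace ℝ (Fin n)
  | 0, f => f
  | k + 1, f => aderiv g (aderivIter g k f)

/-- Elastic energy `E(γ) = ∫ |κ|² ds`. -/
def elE (g : ℝ → EuclideanSpace ℝ (Fin n)) : ℝ :=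
  ∫ x in (-1:ℝ)..1, ‖curvV g x‖ ^ 2 * ‖deriv g x‖

/-- Length `L(γ) = ∫ ds`. -/
def elL (g : ℝ → EuclideanSpace ℝ (Fin n)) : ℝ :=
  ∫ x in (-1:ℝ)..1, ‖deriv g x‖

/-- Energy gradient `∇E(γ) = 2(∂ₛ^⊥)²κ + |κ|²κ`. -/
def gradElE (g : ℝ → EuclideanSpace ℝ (Fin n)) : ℝ → EuclideanSpace ℝ (Fin n) :=
  fun x => (2:ℝ) • aderivPIter g 2 (curvV g) x + ‖curvV g x‖ ^ 2 • curvV g x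

/-- Lagrange multiplier `λ(γ)`. -/
def lagMul (g : ℝ → EuclideanSpace ℝ (Fin n)) : ℝ :=
  (∫ x in (-1:ℝ)..1, ⟪gradElE g x, curvV g x⟫ * ‖deriv g x‖) / elE g

/-- Time derivative `∂ₜγ` of a family. -/
def timeD (γ : ℝ → ℝ → EuclideanSpace ℝ (Fin n)) : ℝ → ℝ → EuclideanSpace ℝ (Fin n) :=
  fun t x => deriv (fun s => γ s x) t

/-- Tangential speed `φ = ⟨∂ₜγ, ∂ₛγ⟩`. -/
def tanSpeed (γ : ℝ → ℝ → EuclideanSpace ℝ (Fin n)) : ℝ → ℝ → ℝ :=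
  fun t x => ⟪timeD γ t x, utang (γ t) x⟫

/-- Normal velocity `V = ∂ₜγ − φ ∂ₛγ`. -/
def normalVel (γ : ℝ → ℝ → EuclideanSpace ℝ (Fin n)) : ℝ → ℝ → EuclideanSpace ℝ (Fin n) :=
  fun t x => timeD γ t x - tanSpeed γ t x • utang (γ t) x

/-- Normal time derivative `∂ₜ^⊥N` of a field along the family γ. -/
def timeDPerp (γ N : ℝ → ℝ → EuclideanSpace ℝ (Fin n)) : ℝ → ℝ → EuclideanSpace ℝ (Fin n) :=
  fun t x => deriv (fun s => N s x) t
    - ⟪deriv (fun s => N s x) t, utang (γ t) x⟫ • utang (γ t) x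

/-- Shape operator `S_p = −Dξ(p)`. -/
def shapeOp (ξ : EuclideanSpace ℝ (Fin n) → EuclideanSpace ℝ (Fin n))
    (p v : EuclideanSpace ℝ (Fin n)) : EuclideanSpace ℝ (Fin n) :=
  -(fderiv ℝ ξ p v)

/-- `L²(ds)` norm of a field along `g`. -/
def l2ds (g f : ℝ → EuclideanSpace ℝ (Fin n)) : ℝ :=
  Real.sqrt (∫ x in (-1:ℝ)..1, ‖f x‖ ^ 2 * ‖deriv g x‖)

/-- Fixed-length free-boundary elastic flow on `[0,T)`. -/
def IsFLFBEF (T : ℝ) (ξ : EuclideanSpace ℝ (Fin n) → EuclideanSpace ℝ (Fin n))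
    (τ : ℝ → ℝ) (γ : ℝ → ℝ → EuclideanSpace ℝ (Fin n)) : Prop :=
  ContDiff ℝ (⊤ : ℕ∞) (fun p : ℝ × ℝ => γ p.1 p.2) ∧
  (∀ t ∈ Ico (0:ℝ) T, ∀ x ∈ Icc (-1:ℝ) 1, deriv (γ t) x ≠ 0) ∧
  (∀ t ∈ Ico (0:ℝ) T, 0 < elE (γ t)) ∧
  (∀ t ∈ Ico (0:ℝ) T, ∀ x ∈ Icc (-1:ℝ) 1,
    timeD γ t x = -(gradElE (γ t) x - lagMul (γ t) • curvV (γ t) x)) ∧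
  (∀ t ∈ Ico (0:ℝ) T, ∀ x ∈ ({-1, 1} : Set ℝ),
    ⟪timeD γ t x, utang (γ t) x⟫ = 0 ∧
    utang (γ t) x = τ x • ξ (γ t x) ∧
    ‖ξ (γ t x)‖ = 1 ∧
    aderivP (γ t) (curvV (γ t)) x = -(τ x • shapeOp ξ (γ t x) (curvV (γ t) x)))


/-!
The time derivative and the arc-length derivative fail to commute only through the
stretching of the parametrisation, `∂ₜ log |∂ₓγ| = ∂ₛφ - ⟨κ, V⟩`, which comes from Schwarz's
theorem `∂ₜ∂ₓγ = ∂ₓ∂ₜγ` and the splitting `∂ₜγ = V + φ ∂ₛγ`; this gives (a) and (b), and (b)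
applied to `γ` and to `∂ₛγ` gives (c) and (e). Everything else comes from differentiating an
identity `⟨u, v⟩ ≡ const` into `⟨u', v⟩ = -⟨u, v'⟩`, for `|∂ₛγ|² = 1`, `⟨V, ∂ₛγ⟩ = 0` and
`⟨N, ∂ₛγ⟩ = 0`. The last one is only known on `[0,T) × [-1,1]`, so it is differentiated within
these intervals, where one-sided derivatives are unique.
-/

open Topology

section PerpProj

variable {E : Type*} [NormedAddCommGroup E] [InnerProductSpace ℝ E]

/-- Pointwise, `nperp`, `aderivP`, `timeDPerp` and `normalVel` are `perpProj (utang _ _)`. -/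
def perpProj (u : E) : E →ₗ[ℝ] E where
  toFun v := v - ⟪v, u⟫ • u
  map_add' v w := by simp only [inner_add_left, add_smul]; abel
  map_smul' c v := by simp only [real_inner_smul_left, smul_sub, smul_smul, RingHom.id_apply]

theorem perpProj_apply (u v : E) : perpProj u v = v - ⟪v, u⟫ • u := rfl

theorem perpProj_self {u : E} (hu : ⟪u, u⟫ = 1) : perpProj u u = 0 := by
  rw [perpProj_apply, hu, one_smul, sub_self]

theorem perpProj_of_inner_eq_zero {u v : E} (hv : ⟪v, u⟫ = 0) : perpProj u v = v := by
  rw [perpProj_apply, hv, zero_smul, sub_zero]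

theorem inner_perpProj_self {u : E} (hu : ⟪u, u⟫ = 1) (v : E) : ⟪perpProj u v, u⟫ = 0 := by
  rw [perpProj_apply, inner_sub_left, real_inner_smul_left, hu, mul_one, sub_self]

end PerpProj

section Calculus

variable {E F : Type*} [NormedAddCommGroup E] [InnerProductSpace ℝ E]
  [NormedAddCommGroup F] [NormedSpace ℝ F]

theorem HasDerivAt.norm_of_ne_zero {c : ℝ → E} {c' : E} {a : ℝ} (h : HasDerivAt c c' a)
    (hc : c a ≠ 0) : HasDerivAt (fun s => ‖c s‖) (⟪c a, c'⟫ / ‖c a‖) a := by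
  have hsq := h.norm_sq.sqrt (pow_ne_zero 2 (norm_ne_zero_iff.2 hc))
  simp only [Real.sqrt_sq (norm_nonneg _)] at hsq
  convert hsq using 1
  field_simp

theorem HasDerivAt.inner_eq_neg_of_eventually_inner_eq {u v : ℝ → E} {u' v' : E}
    {S : Set ℝ} {a c : ℝ} (hu : HasDerivAt u u' a) (hv : HasDerivAt v v' a)
    (hS : UniqueDiffWithinAt ℝ S a) (ha : a ∈ S)
    (h : ∀ᶠ s in 𝓝[S] a, ⟪u s, v s⟫ = c) :
    ⟪u', v a⟫ = -⟪u a, v'⟫ := by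
  have hc : HasDerivWithinAt (fun s => ⟪u s, v s⟫) 0 S a :=
    (hasDerivWithinAt_const a S c).congr_of_eventuallyEq h (h.self_of_nhdsWithin ha)
  have := hS.eq_deriv S (hu.inner ℝ hv).hasDerivWithinAt hc
  linarith

variable {t x : ℝ}

theorem HasFDerivAt.hasDerivAt_slice_fst {u : ℝ × ℝ → F} {u' : ℝ × ℝ →L[ℝ] F}
    (hu : HasFDerivAt u u' (t, x)) : HasDerivAt (fun s => u (s, x)) (u' (1, 0)) t :=
  hu.comp_hasDerivAt t ((hasDerivAt_id t).prodMk (hasDerivAt_const t x))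

theorem HasFDerivAt.hasDerivAt_slice_snd {u : ℝ × ℝ → F} {u' : ℝ × ℝ →L[ℝ] F}
    (hu : HasFDerivAt u u' (t, x)) : HasDerivAt (fun y => u (t, y)) (u' (0, 1)) x :=
  hu.comp_hasDerivAt x ((hasDerivAt_const x t).prodMk (hasDerivAt_id x))

variable {f : ℝ → ℝ → F}

theorem ContDiffAt.differentiableAt_slice_fst
    (hf : ContDiffAt ℝ (⊤ : ℕ∞) (fun p : ℝ × ℝ => f p.1 p.2) (t, x)) :
    DifferentiableAt ℝ (fun s => f s x) t :=
  (hf.differentiableAt (by simp)).hasFDerivAt.hasDerivAt_slice_fst.differentiableAt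

theorem ContDiffAt.differentiableAt_slice_snd
    (hf : ContDiffAt ℝ (⊤ : ℕ∞) (fun p : ℝ × ℝ => f p.1 p.2) (t, x)) :
    DifferentiableAt ℝ (f t) x :=
  (hf.differentiableAt (by simp)).hasFDerivAt.hasDerivAt_slice_snd.differentiableAt

theorem ContDiffAt.contDiffAt_deriv_fst {q : ℝ × ℝ}
    (hf : ContDiffAt ℝ (⊤ : ℕ∞) (fun p : ℝ × ℝ => f p.1 p.2) q) :
    ContDiffAt ℝ (⊤ : ℕ∞) (fun p : ℝ × ℝ => deriv (fun s => f s p.2) p.1) q :=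
  (ContDiffAt.fderiv (f := fun (p : ℝ × ℝ) (s : ℝ) => f s p.2) (g := Prod.fst)
    (m := (⊤ : ℕ∞)) (n := (⊤ : ℕ∞))
    (hf.comp (q, q.1) (by fun_prop : ContDiffAt ℝ (⊤ : ℕ∞)
      (fun z : (ℝ × ℝ) × ℝ => (z.2, z.1.2)) (q, q.1)))
    contDiffAt_fst (by simp)).clm_apply contDiffAt_const

theorem ContDiffAt.contDiffAt_deriv_snd {q : ℝ × ℝ}
    (hf : ContDiffAt ℝ (⊤ : ℕ∞) (fun p : ℝ × ℝ => f p.1 p.2) q) :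
    ContDiffAt ℝ (⊤ : ℕ∞) (fun p : ℝ × ℝ => deriv (f p.1) p.2) q :=
  (ContDiffAt.fderiv (f := fun (p : ℝ × ℝ) (y : ℝ) => f p.1 y) (g := Prod.snd)
    (m := (⊤ : ℕ∞)) (n := (⊤ : ℕ∞))
    (hf.comp (q, q.2) (by fun_prop : ContDiffAt ℝ (⊤ : ℕ∞)
      (fun z : (ℝ × ℝ) × ℝ => (z.1.1, z.2)) (q, q.2)))
    contDiffAt_snd (by simp)).clm_apply contDiffAt_const

theorem deriv_deriv_comm
    (hf : ContDiffAt ℝ (⊤ : ℕ∞) (fun p : ℝ × ℝ => f p.1 p.2) (t, x)) :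
    deriv (fun s => deriv (f s) x) t = deriv (fun y => deriv (fun s => f s y) t) x := by
  set u : ℝ × ℝ → F := fun p => f p.1 p.2
  have hu : ∀ᶠ p in 𝓝 (t, x), DifferentiableAt ℝ u p :=
    ((hf.of_le (show (1 : WithTop ℕ∞) ≤ (⊤ : ℕ∞) by simp)).eventually (by simp)).mono
      fun p hp => hp.differentiableAt one_ne_zero
  have hD : HasFDerivAt (fderiv ℝ u) (fderiv ℝ (fderiv ℝ u) (t, x)) (t, x) :=
    ((hf.fderiv_right (m := (⊤ : ℕ∞)) (by simp)).differentiableAt (by simp)).hasFDerivAt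
  have hfst : (fun s => deriv (f s) x) =ᶠ[𝓝 t] fun s => fderiv ℝ u (s, x) (0, 1) :=
    ((by fun_prop : ContinuousAt (fun s => (s, x)) t).eventually hu).mono
      fun s hs => hs.hasFDerivAt.hasDerivAt_slice_snd.deriv
  have hsnd :
      (fun y => deriv (fun s => f s y) t) =ᶠ[𝓝 x] fun y => fderiv ℝ u (t, y) (1, 0) :=
    ((by fun_prop : ContinuousAt (fun y => (t, y)) x).eventually hu).mono
      fun y hy => hy.hasFDerivAt.hasDerivAt_slice_fst.deriv
  rw [hfst.deriv_eq, hsnd.deriv_eq,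
    (hD.hasDerivAt_slice_fst.clm_apply (hasDerivAt_const t _)).deriv,
    (hD.hasDerivAt_slice_snd.clm_apply (hasDerivAt_const x _)).deriv,
    map_zero, add_zero, add_zero,
    (hf.isSymmSndFDerivAt (by
      rw [minSmoothness_of_isRCLikeNormedField]; exact WithTop.coe_le_coe.2 le_top)).eq]

theorem ContDiffAt.hasDerivAt_deriv_slice
    (hf : ContDiffAt ℝ (⊤ : ℕ∞) (fun p : ℝ × ℝ => f p.1 p.2) (t, x)) :
    HasDerivAt (fun s => deriv (f s) x) (deriv (fun y => deriv (fun s => f s y) t) x) t := by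
  have := (hf.contDiffAt_deriv_snd.differentiableAt_slice_fst
    (f := fun s y => deriv (f s) y)).hasDerivAt
  rwa [deriv_deriv_comm hf] at this

end Calculus

section ArcLength

variable {F : Type*} [NormedAddCommGroup F] [NormedSpace ℝ F]
  {g : ℝ → EuclideanSpace ℝ (Fin n)} {x : ℝ}

theorem aderiv_apply (f : ℝ → F) : aderiv g f x = ‖deriv g x‖⁻¹ • deriv f x := rfl

theorem aderiv_add {f₁ f₂ : ℝ → F} (hf₁ : DifferentiableAt ℝ f₁ x)
    (hf₂ : DifferentiableAt ℝ f₂ x) :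
    aderiv g (fun y => f₁ y + f₂ y) x = aderiv g f₁ x + aderiv g f₂ x := by
  simp only [aderiv_apply, deriv_fun_add hf₁ hf₂, smul_add]

theorem aderiv_smul {c : ℝ → ℝ} {f : ℝ → F} (hc : DifferentiableAt ℝ c x)
    (hf : DifferentiableAt ℝ f x) :
    aderiv g (fun y => c y • f y) x = c x • aderiv g f x + aderiv g c x • f x := by
  simp only [aderiv_apply, deriv_fun_smul hc hf, smul_add, smul_comm _ (c x), smul_eq_mul,
    mul_smul]

theorem aderiv_inner {u v : ℝ → EuclideanSpace ℝ (Fin n)} (hu : DifferentiableAt ℝ u x)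
    (hv : DifferentiableAt ℝ v x) :
    aderiv g (fun y => ⟪u y, v y⟫) x = ⟪aderiv g u x, v x⟫ + ⟪u x, aderiv g v x⟫ := by
  simp only [aderiv_apply, deriv_inner_apply ℝ hu hv, real_inner_smul_left, real_inner_smul_right,
    smul_eq_mul]
  ring

theorem inner_aderiv_eq_neg_of_eventually_inner_eq {u v : ℝ → EuclideanSpace ℝ (Fin n)}
    {S : Set ℝ} {c : ℝ} (hu : DifferentiableAt ℝ u x) (hv : DifferentiableAt ℝ v x)
    (hS : UniqueDiffWithinAt ℝ S x) (hx : x ∈ S)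
    (h : ∀ᶠ y in 𝓝[S] x, ⟪u y, v y⟫ = c) :
    ⟪aderiv g u x, v x⟫ = -⟪u x, aderiv g v x⟫ := by
  rw [aderiv_apply, aderiv_apply, real_inner_smul_left, real_inner_smul_right,
    hu.hasDerivAt.inner_eq_neg_of_eventually_inner_eq hv.hasDerivAt hS hx h, mul_neg]

theorem utang_apply : utang g x = ‖deriv g x‖⁻¹ • deriv g x := rfl

theorem curvV_apply : curvV g x = aderiv g (utang g) x := rfl

theorem aderivP_apply (f : ℝ → EuclideanSpace ℝ (Fin n)) :
    aderivP g f x = perpProj (utang g x) (aderiv g f x) := rfl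

theorem inner_utang_self (hd : deriv g x ≠ 0) : ⟪utang g x, utang g x⟫ = 1 := by
  rw [real_inner_self_eq_norm_sq, utang_apply, norm_smul, norm_inv, norm_norm,
    inv_mul_cancel₀ (norm_ne_zero_iff.2 hd), one_pow]

theorem inner_aderivP_utang (hd : deriv g x ≠ 0) (f : ℝ → EuclideanSpace ℝ (Fin n)) :
    ⟪aderivP g f x, utang g x⟫ = 0 :=
  inner_perpProj_self (inner_utang_self hd) _

end ArcLength

section Family

variable {F : Type*} [NormedAddCommGroup F] [NormedSpace ℝ F]
  {γ N : ℝ → ℝ → EuclideanSpace ℝ (Fin n)} {t x : ℝ}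

theorem normalVel_apply : normalVel γ t x = perpProj (utang (γ t) x) (timeD γ t x) := rfl

theorem timeDPerp_apply :
    timeDPerp γ N t x = perpProj (utang (γ t) x) (deriv (fun s => N s x) t) := rfl

theorem timeD_eq_normalVel_add :
    timeD γ t = fun y => normalVel γ t y + tanSpeed γ t y • utang (γ t) y :=
  funext fun _ => (sub_add_cancel _ _).symm

theorem inner_normalVel_utang (hd : deriv (γ t) x ≠ 0) :
    ⟪normalVel γ t x, utang (γ t) x⟫ = 0 :=
  inner_perpProj_self (inner_utang_self hd) _

theorem contDiffAt_aderiv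
    (hγ : ContDiffAt ℝ (⊤ : ℕ∞) (fun p : ℝ × ℝ => γ p.1 p.2) (t, x))
    (hd : deriv (γ t) x ≠ 0) {f : ℝ → ℝ → F}
    (hf : ContDiffAt ℝ (⊤ : ℕ∞) (fun p : ℝ × ℝ => f p.1 p.2) (t, x)) :
    ContDiffAt ℝ (⊤ : ℕ∞) (fun p : ℝ × ℝ => aderiv (γ p.1) (f p.1) p.2) (t, x) :=
  have hv := hγ.contDiffAt_deriv_snd
  ((hv.norm ℝ hd).inv (norm_ne_zero_iff.2 hd)).smul hf.contDiffAt_deriv_snd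

theorem contDiffAt_utang
    (hγ : ContDiffAt ℝ (⊤ : ℕ∞) (fun p : ℝ × ℝ => γ p.1 p.2) (t, x))
    (hd : deriv (γ t) x ≠ 0) :
    ContDiffAt ℝ (⊤ : ℕ∞) (fun p : ℝ × ℝ => utang (γ p.1) p.2) (t, x) :=
  contDiffAt_aderiv hγ hd hγ

theorem contDiffAt_curvV
    (hγ : ContDiffAt ℝ (⊤ : ℕ∞) (fun p : ℝ × ℝ => γ p.1 p.2) (t, x))
    (hd : deriv (γ t) x ≠ 0) :
    ContDiffAt ℝ (⊤ : ℕ∞) (fun p : ℝ × ℝ => curvV (γ p.1) p.2) (t, x) :=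
  contDiffAt_aderiv (f := fun s => utang (γ s)) hγ hd (contDiffAt_utang hγ hd)

theorem contDiffAt_nperp
    (hγ : ContDiffAt ℝ (⊤ : ℕ∞) (fun p : ℝ × ℝ => γ p.1 p.2) (t, x))
    (hd : deriv (γ t) x ≠ 0) {f : ℝ → ℝ → EuclideanSpace ℝ (Fin n)}
    (hf : ContDiffAt ℝ (⊤ : ℕ∞) (fun p : ℝ × ℝ => f p.1 p.2) (t, x)) :
    ContDiffAt ℝ (⊤ : ℕ∞) (fun p : ℝ × ℝ => nperp (γ p.1) (f p.1) p.2) (t, x) :=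
  have hT := contDiffAt_utang hγ hd
  hf.sub ((hf.inner ℝ hT).smul hT)

theorem contDiffAt_tanSpeed
    (hγ : ContDiffAt ℝ (⊤ : ℕ∞) (fun p : ℝ × ℝ => γ p.1 p.2) (t, x))
    (hd : deriv (γ t) x ≠ 0) :
    ContDiffAt ℝ (⊤ : ℕ∞) (fun p : ℝ × ℝ => tanSpeed γ p.1 p.2) (t, x) :=
  hγ.contDiffAt_deriv_fst.inner ℝ (contDiffAt_utang hγ hd)

theorem contDiffAt_normalVel
    (hγ : ContDiffAt ℝ (⊤ : ℕ∞) (fun p : ℝ × ℝ => γ p.1 p.2) (t, x))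
    (hd : deriv (γ t) x ≠ 0) :
    ContDiffAt ℝ (⊤ : ℕ∞) (fun p : ℝ × ℝ => normalVel γ p.1 p.2) (t, x) :=
  contDiffAt_nperp (f := timeD γ) hγ hd hγ.contDiffAt_deriv_fst

theorem contDiffAt_aderivP
    (hγ : ContDiffAt ℝ (⊤ : ℕ∞) (fun p : ℝ × ℝ => γ p.1 p.2) (t, x))
    (hd : deriv (γ t) x ≠ 0) {f : ℝ → ℝ → EuclideanSpace ℝ (Fin n)}
    (hf : ContDiffAt ℝ (⊤ : ℕ∞) (fun p : ℝ × ℝ => f p.1 p.2) (t, x)) :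
    ContDiffAt ℝ (⊤ : ℕ∞) (fun p : ℝ × ℝ => aderivP (γ p.1) (f p.1) p.2) (t, x) :=
  contDiffAt_nperp (f := fun s => aderiv (γ s) (f s)) hγ hd (contDiffAt_aderiv hγ hd hf)

theorem contDiffAt_timeDPerp
    (hγ : ContDiffAt ℝ (⊤ : ℕ∞) (fun p : ℝ × ℝ => γ p.1 p.2) (t, x))
    (hd : deriv (γ t) x ≠ 0)
    (hN : ContDiffAt ℝ (⊤ : ℕ∞) (fun p : ℝ × ℝ => N p.1 p.2) (t, x)) :
    ContDiffAt ℝ (⊤ : ℕ∞) (fun p : ℝ × ℝ => timeDPerp γ N p.1 p.2) (t, x) :=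
  contDiffAt_nperp (f := fun s y => deriv (fun u => N u y) s) hγ hd hN.contDiffAt_deriv_fst

theorem differentiableAt_utang
    (hγ : ContDiffAt ℝ (⊤ : ℕ∞) (fun p : ℝ × ℝ => γ p.1 p.2) (t, x))
    (hd : deriv (γ t) x ≠ 0) : DifferentiableAt ℝ (utang (γ t)) x :=
  (contDiffAt_utang hγ hd).differentiableAt_slice_snd (f := fun s => utang (γ s))

theorem differentiableAt_timeD
    (hγ : ContDiffAt ℝ (⊤ : ℕ∞) (fun p : ℝ × ℝ => γ p.1 p.2) (t, x)) :
    DifferentiableAt ℝ (timeD γ t) x :=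
  hγ.contDiffAt_deriv_fst.differentiableAt_slice_snd (f := timeD γ)

theorem differentiableAt_tanSpeed
    (hγ : ContDiffAt ℝ (⊤ : ℕ∞) (fun p : ℝ × ℝ => γ p.1 p.2) (t, x))
    (hd : deriv (γ t) x ≠ 0) : DifferentiableAt ℝ (tanSpeed γ t) x :=
  (contDiffAt_tanSpeed hγ hd).differentiableAt_slice_snd (f := tanSpeed γ)

theorem differentiableAt_normalVel
    (hγ : ContDiffAt ℝ (⊤ : ℕ∞) (fun p : ℝ × ℝ => γ p.1 p.2) (t, x))
    (hd : deriv (γ t) x ≠ 0) : DifferentiableAt ℝ (normalVel γ t) x :=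
  (contDiffAt_normalVel hγ hd).differentiableAt_slice_snd (f := normalVel γ)

theorem eventually_deriv_ne_zero
    (hγ : ContDiffAt ℝ (⊤ : ℕ∞) (fun p : ℝ × ℝ => γ p.1 p.2) (t, x))
    (hd : deriv (γ t) x ≠ 0) : ∀ᶠ y in 𝓝 x, deriv (γ t) y ≠ 0 :=
  (hγ.contDiffAt_deriv_snd.continuousAt.comp (f := fun y => (t, y)) (by fun_prop)).eventually_ne hd

theorem inner_curvV_utang
    (hγ : ContDiffAt ℝ (⊤ : ℕ∞) (fun p : ℝ × ℝ => γ p.1 p.2) (t, x))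
    (hd : deriv (γ t) x ≠ 0) : ⟪curvV (γ t) x, utang (γ t) x⟫ = 0 := by
  have hT := differentiableAt_utang hγ hd
  have h : ⟪curvV (γ t) x, utang (γ t) x⟫ = -⟪utang (γ t) x, curvV (γ t) x⟫ :=
    inner_aderiv_eq_neg_of_eventually_inner_eq hT hT uniqueDiffWithinAt_univ (mem_univ x)
      (c := 1) (by
        rw [nhdsWithin_univ]
        exact (eventually_deriv_ne_zero hγ hd).mono fun y hy => inner_utang_self hy)
  rw [real_inner_comm (curvV (γ t) x)] at h
  linarith

theorem inner_aderiv_normalVel_utang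
    (hγ : ContDiffAt ℝ (⊤ : ℕ∞) (fun p : ℝ × ℝ => γ p.1 p.2) (t, x))
    (hd : deriv (γ t) x ≠ 0) :
    ⟪aderiv (γ t) (normalVel γ t) x, utang (γ t) x⟫
      = -⟪normalVel γ t x, curvV (γ t) x⟫ :=
  inner_aderiv_eq_neg_of_eventually_inner_eq (differentiableAt_normalVel hγ hd)
    (differentiableAt_utang hγ hd) uniqueDiffWithinAt_univ (mem_univ x)
    (c := 0) (by
      rw [nhdsWithin_univ]
      exact (eventually_deriv_ne_zero hγ hd).mono fun y hy => inner_normalVel_utang hy)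

theorem inner_curvV_normalVel
    (hγ : ContDiffAt ℝ (⊤ : ℕ∞) (fun p : ℝ × ℝ => γ p.1 p.2) (t, x))
    (hd : deriv (γ t) x ≠ 0) :
    ⟪curvV (γ t) x, normalVel γ t x⟫ = ⟪curvV (γ t) x, timeD γ t x⟫ := by
  rw [normalVel_apply, perpProj_apply, inner_sub_right, real_inner_smul_right,
    real_inner_comm (utang _ _), inner_curvV_utang hγ hd, mul_zero, sub_zero]

theorem aderiv_timeD
    (hγ : ContDiffAt ℝ (⊤ : ℕ∞) (fun p : ℝ × ℝ => γ p.1 p.2) (t, x))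
    (hd : deriv (γ t) x ≠ 0) :
    aderiv (γ t) (timeD γ t) x
      = aderiv (γ t) (normalVel γ t) x + tanSpeed γ t x • curvV (γ t) x
        + aderiv (γ t) (tanSpeed γ t) x • utang (γ t) x := by
  have hφ := differentiableAt_tanSpeed hγ hd
  have hT := differentiableAt_utang hγ hd
  rw [timeD_eq_normalVel_add, aderiv_add (differentiableAt_normalVel hγ hd) (hφ.fun_smul hT),
    aderiv_smul hφ hT, add_assoc, curvV_apply]

theorem aderiv_tanSpeed_sub_inner_curvV_normalVel
    (hγ : ContDiffAt ℝ (⊤ : ℕ∞) (fun p : ℝ × ℝ => γ p.1 p.2) (t, x))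
    (hd : deriv (γ t) x ≠ 0) :
    aderiv (γ t) (tanSpeed γ t) x - ⟪curvV (γ t) x, normalVel γ t x⟫
      = ⟪aderiv (γ t) (timeD γ t) x, utang (γ t) x⟫ := by
  have hφ : aderiv (γ t) (tanSpeed γ t) x
      = ⟪aderiv (γ t) (timeD γ t) x, utang (γ t) x⟫ + ⟪timeD γ t x, curvV (γ t) x⟫ :=
    aderiv_inner (differentiableAt_timeD hγ) (differentiableAt_utang hγ hd)
  rw [hφ, inner_curvV_normalVel hγ hd, real_inner_comm (curvV _ _)]
  ring

end Family

section Evolution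

variable {F : Type*} [NormedAddCommGroup F] [NormedSpace ℝ F]
  {γ N : ℝ → ℝ → EuclideanSpace ℝ (Fin n)} {t x : ℝ}

theorem hasDerivAt_norm_deriv
    (hγ : ContDiffAt ℝ (⊤ : ℕ∞) (fun p : ℝ × ℝ => γ p.1 p.2) (t, x))
    (hd : deriv (γ t) x ≠ 0) :
    HasDerivAt (fun s => ‖deriv (γ s) x‖)
      ((aderiv (γ t) (tanSpeed γ t) x - ⟪curvV (γ t) x, normalVel γ t x⟫)
        * ‖deriv (γ t) x‖) t := by
  have hv : HasDerivAt (fun s => deriv (γ s) x) (deriv (timeD γ t) x) t :=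
    hγ.hasDerivAt_deriv_slice
  convert hv.norm_of_ne_zero hd using 1
  rw [aderiv_tanSpeed_sub_inner_curvV_normalVel hγ hd, aderiv_apply, utang_apply,
    real_inner_smul_left, real_inner_smul_right, real_inner_comm]
  field_simp

theorem hasDerivAt_aderiv {f : ℝ → ℝ → F}
    (hγ : ContDiffAt ℝ (⊤ : ℕ∞) (fun p : ℝ × ℝ => γ p.1 p.2) (t, x))
    (hd : deriv (γ t) x ≠ 0)
    (hf : ContDiffAt ℝ (⊤ : ℕ∞) (fun p : ℝ × ℝ => f p.1 p.2) (t, x)) :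
    HasDerivAt (fun s => aderiv (γ s) (f s) x)
      (aderiv (γ t) (fun y => deriv (fun s => f s y) t) x
        + (⟪curvV (γ t) x, normalVel γ t x⟫ - aderiv (γ t) (tanSpeed γ t) x)
          • aderiv (γ t) (f t) x) t := by
  have hr : ‖deriv (γ t) x‖ ≠ 0 := norm_ne_zero_iff.2 hd
  refine (((hasDerivAt_norm_deriv hγ hd).inv hr).smul hf.hasDerivAt_deriv_slice).congr_deriv ?_
  rw [aderiv_apply (f t), aderiv_apply (fun y => deriv (fun s => f s y) t), smul_smul,
    Pi.inv_apply]
  congr 2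
  field_simp
  ring

theorem hasDerivAt_utang
    (hγ : ContDiffAt ℝ (⊤ : ℕ∞) (fun p : ℝ × ℝ => γ p.1 p.2) (t, x))
    (hd : deriv (γ t) x ≠ 0) :
    HasDerivAt (fun s => utang (γ s) x)
      (aderivP (γ t) (normalVel γ t) x + tanSpeed γ t x • curvV (γ t) x) t := by
  refine (hasDerivAt_aderiv hγ hd hγ).congr_deriv ?_
  rw [show (fun y => deriv (fun s => γ s y) t) = timeD γ t from rfl, aderiv_timeD hγ hd,
    aderivP_apply, perpProj_apply, inner_aderiv_normalVel_utang hγ hd,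
    real_inner_comm (curvV _ _), show aderiv (γ t) (γ t) x = utang (γ t) x from rfl]
  module

theorem inner_deriv_utang_of_normal {S : Set ℝ}
    (hγ : ContDiffAt ℝ (⊤ : ℕ∞) (fun p : ℝ × ℝ => γ p.1 p.2) (t, x))
    (hd : deriv (γ t) x ≠ 0)
    (hN : ContDiffAt ℝ (⊤ : ℕ∞) (fun p : ℝ × ℝ => N p.1 p.2) (t, x))
    (hS : UniqueDiffWithinAt ℝ S t) (ht : t ∈ S)
    (hNS : ∀ s ∈ S, ⟪N s x, utang (γ s) x⟫ = 0) :
    ⟪deriv (fun s => N s x) t, utang (γ t) x⟫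
      = -⟪aderivP (γ t) (normalVel γ t) x + tanSpeed γ t x • curvV (γ t) x, N t x⟫ := by
  rw [hN.differentiableAt_slice_fst.hasDerivAt.inner_eq_neg_of_eventually_inner_eq
    (hasDerivAt_utang hγ hd) hS ht (eventually_nhdsWithin_of_forall hNS), real_inner_comm]

theorem deriv_eq_timeDPerp_sub {S : Set ℝ}
    (hγ : ContDiffAt ℝ (⊤ : ℕ∞) (fun p : ℝ × ℝ => γ p.1 p.2) (t, x))
    (hd : deriv (γ t) x ≠ 0)
    (hN : ContDiffAt ℝ (⊤ : ℕ∞) (fun p : ℝ × ℝ => N p.1 p.2) (t, x))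
    (hS : UniqueDiffWithinAt ℝ S t) (ht : t ∈ S)
    (hNS : ∀ s ∈ S, ⟪N s x, utang (γ s) x⟫ = 0) :
    deriv (fun s => N s x) t
      = timeDPerp γ N t x
        - ⟪aderivP (γ t) (normalVel γ t) x + tanSpeed γ t x • curvV (γ t) x, N t x⟫
            • utang (γ t) x := by
  rw [timeDPerp_apply, perpProj_apply, inner_deriv_utang_of_normal hγ hd hN hS ht hNS, neg_smul,
    sub_neg_eq_add, add_sub_cancel_right]

theorem timeDPerp_curvV
    (hγ : ContDiff ℝ (⊤ : ℕ∞) (fun p : ℝ × ℝ => γ p.1 p.2))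
    (hd : deriv (γ t) x ≠ 0) :
    timeDPerp γ (fun s => curvV (γ s)) t x
      = aderivPIter (γ t) 2 (normalVel γ t) x
        + ⟪curvV (γ t) x, normalVel γ t x⟫ • curvV (γ t) x
        + tanSpeed γ t x • aderivP (γ t) (curvV (γ t)) x := by
  have hγt := hγ.contDiffAt (x := (t, x))
  have hW : (fun y => deriv (fun s => utang (γ s) y) t) =ᶠ[𝓝 x]
      fun y => aderivP (γ t) (normalVel γ t) y + tanSpeed γ t y • curvV (γ t) y :=
    (eventually_deriv_ne_zero hγt hd).mono fun y hy => (hasDerivAt_utang hγ.contDiffAt hy).deriv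
  have hφ := differentiableAt_tanSpeed hγt hd
  have hκ := (contDiffAt_curvV hγt hd).differentiableAt_slice_snd (f := fun s => curvV (γ s))
  have hdW : aderiv (γ t) (fun y => deriv (fun s => utang (γ s) y) t) x
      = aderiv (γ t) (aderivP (γ t) (normalVel γ t)) x
        + (tanSpeed γ t x • aderiv (γ t) (curvV (γ t)) x
          + aderiv (γ t) (tanSpeed γ t) x • curvV (γ t) x) := by
    have hSV := (contDiffAt_aderivP hγt hd (contDiffAt_normalVel hγt hd))
      |>.differentiableAt_slice_snd (f := fun s => aderivP (γ s) (normalVel γ s))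
    rw [aderiv_apply, hW.deriv_eq, ← aderiv_apply, aderiv_add hSV (hφ.fun_smul hκ),
      aderiv_smul hφ hκ]
  have hκt : deriv (fun s => curvV (γ s) x) t
      = aderiv (γ t) (fun y => deriv (fun s => utang (γ s) y) t) x
        + (⟪curvV (γ t) x, normalVel γ t x⟫ - aderiv (γ t) (tanSpeed γ t) x)
          • curvV (γ t) x :=
    (hasDerivAt_aderiv hγt hd (contDiffAt_utang hγt hd)).deriv
  rw [timeDPerp_apply, hκt, hdW,
    show aderivPIter (γ t) 2 (normalVel γ t) x
      = aderivP (γ t) (aderivP (γ t) (normalVel γ t)) x from rfl,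
    aderivP_apply, aderivP_apply (curvV (γ t))]
  simp only [map_add, map_smul, perpProj_of_inner_eq_zero (inner_curvV_utang hγt hd)]
  module

theorem timeDPerp_aderivP
    (hγ : ContDiffAt ℝ (⊤ : ℕ∞) (fun p : ℝ × ℝ => γ p.1 p.2) (t, x))
    (hd : deriv (γ t) x ≠ 0)
    (hN : ContDiffAt ℝ (⊤ : ℕ∞) (fun p : ℝ × ℝ => N p.1 p.2) (t, x)) :
    timeDPerp γ (fun s => aderivP (γ s) (N s)) t x
      = perpProj (utang (γ t) x) (deriv (fun s => aderiv (γ s) (N s) x) t)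
        - ⟪aderiv (γ t) (N t) x, utang (γ t) x⟫
          • (aderivP (γ t) (normalVel γ t) x + tanSpeed γ t x • curvV (γ t) x) := by
  have hWT : ⟪aderivP (γ t) (normalVel γ t) x + tanSpeed γ t x • curvV (γ t) x,
      utang (γ t) x⟫ = 0 := by
    rw [inner_add_left, real_inner_smul_left, inner_aderivP_utang hd, inner_curvV_utang hγ hd,
      mul_zero, add_zero]
  have hTt := hasDerivAt_utang hγ hd
  have hB := (hasDerivAt_aderiv hγ hd hN).differentiableAt.hasDerivAt
  have hP : deriv (fun s => aderivP (γ s) (N s) x) t = _ :=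
    (hB.sub ((hB.inner ℝ hTt).smul hTt)).deriv
  rw [timeDPerp_apply, hP]
  simp only [map_add, map_sub, map_smul, perpProj_self (inner_utang_self hd),
    perpProj_of_inner_eq_zero hWT, smul_zero, add_zero]

theorem aderiv_deriv_eq_aderiv_timeDPerp_add
    (hγ : ContDiffAt ℝ (⊤ : ℕ∞) (fun p : ℝ × ℝ => γ p.1 p.2) (t, x))
    (hd : deriv (γ t) x ≠ 0)
    (hN : ContDiffAt ℝ (⊤ : ℕ∞) (fun p : ℝ × ℝ => N p.1 p.2) (t, x)) :
    aderiv (γ t) (fun y => deriv (fun s => N s y) t) x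
      = aderiv (γ t) (fun y => timeDPerp γ N t y) x
        + (⟪deriv (fun s => N s x) t, utang (γ t) x⟫ • curvV (γ t) x
          + aderiv (γ t) (fun y => ⟪deriv (fun s => N s y) t, utang (γ t) y⟫) x
            • utang (γ t) x) := by
  rw [show (fun y => deriv (fun s => N s y) t) = fun y => timeDPerp γ N t y
      + ⟪deriv (fun s => N s y) t, utang (γ t) y⟫ • utang (γ t) y
      from funext fun y => (sub_add_cancel _ _).symm]
  have hT := differentiableAt_utang hγ hd
  have hNT := (contDiffAt_timeDPerp hγ hd hN).differentiableAt_slice_snd (f := timeDPerp γ N)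
  have hinner := (hN.contDiffAt_deriv_fst.inner ℝ (contDiffAt_utang hγ hd))
    |>.differentiableAt_slice_snd (f := fun s y => ⟪deriv (fun u => N u y) s, utang (γ s) y⟫)
  rw [aderiv_add hNT (hinner.fun_smul hT), aderiv_smul hinner hT]
  rfl

theorem timeDPerp_aderivP_sub_aderivP_timeDPerp {S X : Set ℝ}
    (hγ : ContDiffAt ℝ (⊤ : ℕ∞) (fun p : ℝ × ℝ => γ p.1 p.2) (t, x))
    (hd : deriv (γ t) x ≠ 0)
    (hN : ContDiffAt ℝ (⊤ : ℕ∞) (fun p : ℝ × ℝ => N p.1 p.2) (t, x))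
    (hS : UniqueDiffWithinAt ℝ S t) (ht : t ∈ S)
    (hX : UniqueDiffWithinAt ℝ X x) (hx : x ∈ X)
    (hNS : ∀ s ∈ S, ⟪N s x, utang (γ s) x⟫ = 0)
    (hNX : ∀ y ∈ X, ⟪N t y, utang (γ t) y⟫ = 0) :
    timeDPerp γ (fun s => aderivP (γ s) (N s)) t x
        - aderivP (γ t) (fun y => timeDPerp γ N t y) x
      = (⟪curvV (γ t) x, normalVel γ t x⟫ - aderiv (γ t) (tanSpeed γ t) x)
          • aderivP (γ t) (N t) x
        + ⟪curvV (γ t) x, N t x⟫ • aderivP (γ t) (normalVel γ t) x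
        - ⟪aderivP (γ t) (normalVel γ t) x, N t x⟫ • curvV (γ t) x := by
  have hNsT : ⟪aderiv (γ t) (N t) x, utang (γ t) x⟫ = -⟪N t x, curvV (γ t) x⟫ :=
    inner_aderiv_eq_neg_of_eventually_inner_eq hN.differentiableAt_slice_snd
      (differentiableAt_utang hγ hd) hX hx (eventually_nhdsWithin_of_forall hNX)
  rw [timeDPerp_aderivP hγ hd hN, (hasDerivAt_aderiv hγ hd hN).deriv,
    aderiv_deriv_eq_aderiv_timeDPerp_add hγ hd hN, aderivP_apply (fun y => timeDPerp γ N t y),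
    aderivP_apply (N t), inner_deriv_utang_of_normal hγ hd hN hS ht hNS, hNsT]
  simp only [map_add, map_smul, perpProj_self (inner_utang_self hd),
    perpProj_of_inner_eq_zero (inner_curvV_utang hγ hd), smul_zero, add_zero, inner_add_right,
    real_inner_smul_right, real_inner_comm (N t x)]
  module

end Evolution

theorem statement0_general
    (n : ℕ) (T : ℝ)
    (γ : ℝ → ℝ → EuclideanSpace ℝ (Fin n))
    (hγ : ContDiff ℝ (⊤ : ℕ∞) (fun p : ℝ × ℝ => γ p.1 p.2))
    (himm : ∀ t ∈ Ico (0:ℝ) T, ∀ x ∈ Icc (-1:ℝ) 1, deriv (γ t) x ≠ 0)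
    (N : ℝ → ℝ → EuclideanSpace ℝ (Fin n))
    (hN : ContDiff ℝ (⊤ : ℕ∞) (fun p : ℝ × ℝ => N p.1 p.2))
    (hNnormal : ∀ t ∈ Ico (0:ℝ) T, ∀ x ∈ Icc (-1:ℝ) 1, ⟪N t x, utang (γ t) x⟫ = 0) :
    ∀ t ∈ Ico (0:ℝ) T, ∀ x ∈ Icc (-1:ℝ) 1,
      -- (a)  ∂ₜ|∂ₓγ| = (∂ₛφ − ⟨κ, V⟩)|∂ₓγ|
      (deriv (fun s => ‖deriv (γ s) x‖) t
        = (aderiv (γ t) (tanSpeed γ t) x - ⟪curvV (γ t) x, normalVel γ t x⟫)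
            * ‖deriv (γ t) x‖) ∧
      -- (b)  ∂ₜ(∂ₛ f) − ∂ₛ(∂ₜ f) = (⟨κ, V⟩ − ∂ₛφ)∂ₛ f
      (∀ (d : ℕ) (f : ℝ → ℝ → EuclideanSpace ℝ (Fin d)),
        ContDiff ℝ (⊤ : ℕ∞) (fun p : ℝ × ℝ => f p.1 p.2) →
        deriv (fun s => aderiv (γ s) (f s) x) t
            - aderiv (γ t) (fun y => deriv (fun s => f s y) t) x
          = (⟪curvV (γ t) x, normalVel γ t x⟫ - aderiv (γ t) (tanSpeed γ t) x)
              • aderiv (γ t) (f t) x) ∧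
      -- (c)  ∂ₜ∂ₛγ = ∂ₛ^⊥V + φκ
      (deriv (fun s => utang (γ s) x) t
        = aderivP (γ t) (normalVel γ t) x + tanSpeed γ t x • curvV (γ t) x) ∧
      -- (d)  ∂ₜN = ∂ₜ^⊥N − ⟨∂ₛ^⊥V + φκ, N⟩∂ₛγ
      (deriv (fun s => N s x) t
        = timeDPerp γ N t x
          - ⟪aderivP (γ t) (normalVel γ t) x + tanSpeed γ t x • curvV (γ t) x, N t x⟫
              • utang (γ t) x) ∧
      -- (e)  ∂ₜ^⊥κ = (∂ₛ^⊥)²V + ⟨κ, V⟩κ + φ∂ₛ^⊥κ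
      (timeDPerp γ (fun s => curvV (γ s)) t x
        = aderivPIter (γ t) 2 (normalVel γ t) x
          + ⟪curvV (γ t) x, normalVel γ t x⟫ • curvV (γ t) x
          + tanSpeed γ t x • aderivP (γ t) (curvV (γ t)) x) ∧
      -- (f)  (∂ₜ^⊥∂ₛ^⊥ − ∂ₛ^⊥∂ₜ^⊥)N = (⟨κ,V⟩ − ∂ₛφ)∂ₛ^⊥N + ⟨κ,N⟩∂ₛ^⊥V − ⟨∂ₛ^⊥V,N⟩κ
      (timeDPerp γ (fun s => aderivP (γ s) (N s)) t x
          - aderivP (γ t) (fun y => timeDPerp γ N t y) x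
        = (⟪curvV (γ t) x, normalVel γ t x⟫ - aderiv (γ t) (tanSpeed γ t) x)
            • aderivP (γ t) (N t) x
          + ⟪curvV (γ t) x, N t x⟫ • aderivP (γ t) (normalVel γ t) x
          - ⟪aderivP (γ t) (normalVel γ t) x, N t x⟫ • curvV (γ t) x) := by
  intro t ht x hx
  have hd := himm t ht x hx
  have hγt := hγ.contDiffAt (x := (t, x))
  have hNt := hN.contDiffAt (x := (t, x))
  have hS : UniqueDiffWithinAt ℝ (Ico 0 T) t := uniqueDiffOn_Ico 0 T t ht
  have hX : UniqueDiffWithinAt ℝ (Icc (-1) 1) x := uniqueDiffOn_Icc (by norm_num) x hx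
  have hNS : ∀ s ∈ Ico 0 T, ⟪N s x, utang (γ s) x⟫ = 0 := fun s hs => hNnormal s hs x hx
  refine ⟨(hasDerivAt_norm_deriv hγt hd).deriv, fun d f hf => ?_,
    (hasDerivAt_utang hγt hd).deriv, deriv_eq_timeDPerp_sub hγt hd hNt hS ht hNS,
    timeDPerp_curvV hγ hd,
    timeDPerp_aderivP_sub_aderivP_timeDPerp hγt hd hNt hS ht hX hx hNS (hNnormal t ht)⟩
  rw [(hasDerivAt_aderiv hγt hd hf.contDiffAt).deriv, add_sub_cancel_left]

/-- the evolution equations (a)–(f) of Lemma 2.1. -/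
theorem statement0
    (n : ℕ) (hn : 2 ≤ n) (T : ℝ) (hT : 0 < T)
    (γ : ℝ → ℝ → EuclideanSpace ℝ (Fin n))
    (hγ : ContDiff ℝ (⊤ : ℕ∞) (fun p : ℝ × ℝ => γ p.1 p.2))
    (himm : ∀ t ∈ Ico (0:ℝ) T, ∀ x ∈ Icc (-1:ℝ) 1, deriv (γ t) x ≠ 0)
    (N : ℝ → ℝ → EuclideanSpace ℝ (Fin n))
    (hN : ContDiff ℝ (⊤ : ℕ∞) (fun p : ℝ × ℝ => N p.1 p.2))
    (hNnormal : ∀ t ∈ Ico (0:ℝ) T, ∀ x ∈ Icc (-1:ℝ) 1, ⟪N t x, utang (γ t) x⟫ = 0) :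
    ∀ t ∈ Ico (0:ℝ) T, ∀ x ∈ Icc (-1:ℝ) 1,
      -- (a)  ∂ₜ|∂ₓγ| = (∂ₛφ − ⟨κ, V⟩)|∂ₓγ|
      (deriv (fun s => ‖deriv (γ s) x‖) t
        = (aderiv (γ t) (tanSpeed γ t) x - ⟪curvV (γ t) x, normalVel γ t x⟫)
            * ‖deriv (γ t) x‖) ∧
      -- (b)  ∂ₜ(∂ₛ f) − ∂ₛ(∂ₜ f) = (⟨κ, V⟩ − ∂ₛφ)∂ₛ f
      (∀ (d : ℕ) (f : ℝ → ℝ → EuclideanSpace ℝ (Fin d)),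
        ContDiff ℝ (⊤ : ℕ∞) (fun p : ℝ × ℝ => f p.1 p.2) →
        deriv (fun s => aderiv (γ s) (f s) x) t
            - aderiv (γ t) (fun y => deriv (fun s => f s y) t) x
          = (⟪curvV (γ t) x, normalVel γ t x⟫ - aderiv (γ t) (tanSpeed γ t) x)
              • aderiv (γ t) (f t) x) ∧
      -- (c)  ∂ₜ∂ₛγ = ∂ₛ^⊥V + φκ
      (deriv (fun s => utang (γ s) x) t
        = aderivP (γ t) (normalVel γ t) x + tanSpeed γ t x • curvV (γ t) x) ∧
      -- (d)  ∂ₜN = ∂ₜ^⊥N − ⟨∂ₛ^⊥V + φκ, N⟩∂ₛγ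
      (deriv (fun s => N s x) t
        = timeDPerp γ N t x
          - ⟪aderivP (γ t) (normalVel γ t) x + tanSpeed γ t x • curvV (γ t) x, N t x⟫
              • utang (γ t) x) ∧
      -- (e)  ∂ₜ^⊥κ = (∂ₛ^⊥)²V + ⟨κ, V⟩κ + φ∂ₛ^⊥κ
      (timeDPerp γ (fun s => curvV (γ s)) t x
        = aderivPIter (γ t) 2 (normalVel γ t) x
          + ⟪curvV (γ t) x, normalVel γ t x⟫ • curvV (γ t) x
          + tanSpeed γ t x • aderivP (γ t) (curvV (γ t)) x) ∧
      -- (f)  (∂ₜ^⊥∂ₛ^⊥ − ∂ₛ^⊥∂ₜ^⊥)N = (⟨κ,V⟩ − ∂ₛφ)∂ₛ^⊥N + ⟨κ,N⟩∂ₛ^⊥V − ⟨∂ₛ^⊥V,N⟩κ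
      (timeDPerp γ (fun s => aderivP (γ s) (N s)) t x
          - aderivP (γ t) (fun y => timeDPerp γ N t y) x
        = (⟪curvV (γ t) x, normalVel γ t x⟫ - aderiv (γ t) (tanSpeed γ t) x)
            • aderivP (γ t) (N t) x
          + ⟪curvV (γ t) x, N t x⟫ • aderivP (γ t) (normalVel γ t) x
          - ⟪aderivP (γ t) (normalVel γ t) x, N t x⟫ • curvV (γ t) x) :=
  statement0_general n T γ hγ himm N hN hNnormal
end
end

section
/- Let ξ: ℝⁿ → ℝⁿ be smooth, S_x := −Dξ(x), and τ₀: {−1,1} → {−1,1}. Let γ: [0,T)×[-1,1] → ℝⁿ be a smooth family of immersions such that for all t ∈ [0,T) and x ∈ {−1,1}: ⟨∂_tγ(t,x), ∂_sγ(t,x)⟩ = 0 and ∂_sγ(t,x) = τ₀(x)ξ(γ(t,x)). Then, with V = (∂_tγ)^⊥ = ∂_tγ − ⟨∂_tγ, ∂_sγ⟩∂_sγ, one has ∂_s^⊥V(t,x) = −τ₀(x) S_{γ(t,x)} V(t,x) for all t ∈ [0,T) and x ∈ {−1,1}. -/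
open Set MeasureTheory Filter
open scoped RealInnerProductSpace

noncomputable section

variable {n : ℕ}

/-! At a boundary point the tangential speed `φ = ⟨∂ₜγ, ∂ₛγ⟩` vanishes, so up to tangential
terms `∂ₛV` is `|∂ₓγ|⁻¹ ∂ₓ∂ₜγ = |∂ₓγ|⁻¹ ∂ₜ(|∂ₓγ| ∂ₛγ)`, i.e. `∂ₜ∂ₛγ`; the latter is normal
since `|∂ₛγ| = 1`, hence `∂ₛ^⊥V = ∂ₜ∂ₛγ`. Differentiating the boundary condition
`∂ₛγ = τ₀ ξ ∘ γ` in time gives `∂ₜ∂ₛγ = τ₀ Dξ(∂ₜγ) = -τ₀ S V`, because `V = ∂ₜγ` where `φ = 0`.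
At `t = 0` the boundary identities hold only for later times, so time derivatives are compared
from the right on `[t, T)`. -/

open Topology

section OneSided

variable {E : Type*} [NormedAddCommGroup E] [NormedSpace ℝ E]

theorem HasDerivAt.eq_of_eqOn_Ico {f g : ℝ → E} {f' g' : E} {t T : ℝ} (htT : t < T)
    (hf : HasDerivAt f f' t) (hg : HasDerivAt g g' t) (hfg : EqOn f g (Ico t T)) :
    f' = g' := by
  have hfg' : f =ᶠ[𝓝[≥] t] g := Filter.mem_of_superset (Ico_mem_nhdsGE htT) hfg
  exact (uniqueDiffWithinAt_Ici t).eq_deriv _ hf.hasDerivWithinAt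
    (hg.hasDerivWithinAt.congr_of_eventuallyEq hfg' (hfg ⟨le_rfl, htT⟩))

theorem inner_eq_zero_of_hasDerivAt_of_norm_eq_one {F : Type*} [NormedAddCommGroup F]
    [InnerProductSpace ℝ F] {u : ℝ → F} {u' : F} {t T : ℝ} (htT : t < T)
    (hu : HasDerivAt u u' t) (hnorm : ∀ s ∈ Ico t T, ‖u s‖ = 1) : ⟪u', u t⟫ = 0 := by
  have hsq : EqOn (fun s => ⟪u s, u s⟫) (fun _ => (1 : ℝ)) (Ico t T) := fun s hs => by
    simp [hnorm s hs]
  have h := (hu.inner ℝ hu).eq_of_eqOn_Ico htT (hasDerivAt_const t 1) hsq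
  rw [real_inner_comm (u t)] at h ⊢
  linarith

end OneSided

section PartialDerivatives

variable {E : Type*} [NormedAddCommGroup E] [NormedSpace ℝ E]

theorem HasFDerivAt.hasDerivAt_comp_prodMk_left {G : ℝ × ℝ → E} {G' : ℝ × ℝ →L[ℝ] E}
    {t y : ℝ} (hG : HasFDerivAt G G' (t, y)) : HasDerivAt (fun s => G (s, y)) (G' (1, 0)) t := by
  simpa [Function.comp_def] using (hG.comp t (hasFDerivAt_prodMk_left t y)).hasDerivAt

theorem HasFDerivAt.hasDerivAt_comp_prodMk_right {G : ℝ × ℝ → E} {G' : ℝ × ℝ →L[ℝ] E}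
    {t y : ℝ} (hG : HasFDerivAt G G' (t, y)) : HasDerivAt (fun y => G (t, y)) (G' (0, 1)) y := by
  simpa [Function.comp_def] using (hG.comp y (hasFDerivAt_prodMk_right t y)).hasDerivAt

variable {f : ℝ → ℝ → E}

theorem deriv_fst_eq_fderiv {t y : ℝ}
    (hf : DifferentiableAt ℝ (fun p : ℝ × ℝ => f p.1 p.2) (t, y)) :
    deriv (fun s => f s y) t = fderiv ℝ (fun p : ℝ × ℝ => f p.1 p.2) (t, y) (1, 0) :=
  hf.hasFDerivAt.hasDerivAt_comp_prodMk_left.deriv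

theorem deriv_snd_eq_fderiv {t y : ℝ}
    (hf : DifferentiableAt ℝ (fun p : ℝ × ℝ => f p.1 p.2) (t, y)) :
    deriv (f t) y = fderiv ℝ (fun p : ℝ × ℝ => f p.1 p.2) (t, y) (0, 1) :=
  hf.hasFDerivAt.hasDerivAt_comp_prodMk_right.deriv

variable (hf : ContDiff ℝ 2 (fun p : ℝ × ℝ => f p.1 p.2))
include hf

theorem contDiff_deriv_fst : ContDiff ℝ 1 (fun p : ℝ × ℝ => deriv (fun s => f s p.2) p.1) := by
  simp_rw [deriv_fst_eq_fderiv (hf.differentiable two_ne_zero _)]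
  exact (hf.fderiv_right one_add_one_eq_two.le).clm_apply contDiff_const

theorem contDiff_deriv_snd : ContDiff ℝ 1 (fun p : ℝ × ℝ => deriv (f p.1) p.2) := by
  simp_rw [deriv_snd_eq_fderiv (hf.differentiable two_ne_zero _)]
  exact (hf.fderiv_right one_add_one_eq_two.le).clm_apply contDiff_const

theorem deriv_deriv_fst_comm (t x : ℝ) :
    deriv (fun y => deriv (fun s => f s y) t) x = deriv (fun s => deriv (f s) x) t := by
  set F : ℝ × ℝ → E := fun p => f p.1 p.2
  have hF' : HasFDerivAt (fderiv ℝ F) (fderiv ℝ (fderiv ℝ F) (t, x)) (t, x) :=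
    ((hf.fderiv_right one_add_one_eq_two.le).differentiable one_ne_zero _).hasFDerivAt
  simp_rw [deriv_fst_eq_fderiv (hf.differentiable two_ne_zero _),
    deriv_snd_eq_fderiv (hf.differentiable two_ne_zero _)]
  rw [(hF'.hasDerivAt_comp_prodMk_right.clm_apply (hasDerivAt_const x (1, 0))).deriv,
    (hF'.hasDerivAt_comp_prodMk_left.clm_apply (hasDerivAt_const t (0, 1))).deriv]
  simpa using (hf.contDiffAt.isSymmSndFDerivAt (by simp)).eq (0, 1) (1, 0)

theorem differentiable_deriv_fst_right (t : ℝ) :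
    Differentiable ℝ (fun y => deriv (fun s => f s y) t) :=
  ((contDiff_deriv_fst hf).comp (contDiff_const.prodMk contDiff_id)).differentiable one_ne_zero

theorem differentiable_deriv_snd_left (x : ℝ) : Differentiable ℝ (fun s => deriv (f s) x) :=
  ((contDiff_deriv_snd hf).comp (contDiff_id.prodMk contDiff_const)).differentiable one_ne_zero

theorem differentiable_deriv_snd_right (t : ℝ) : Differentiable ℝ (deriv (f t)) :=
  ((contDiff_deriv_snd hf).comp (contDiff_const.prodMk contDiff_id)).differentiable one_ne_zero

end PartialDerivatives

theorem DifferentiableAt.inv_norm_smul {F : Type*} [NormedAddCommGroup F] [InnerProductSpace ℝ F]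
    {h : ℝ → F} {t : ℝ} (hh : DifferentiableAt ℝ h t) (h0 : h t ≠ 0) :
    DifferentiableAt ℝ (fun s => ‖h s‖⁻¹ • h s) t :=
  ((hh.norm ℝ h0).inv (norm_ne_zero_iff.2 h0)).smul hh

section Curve

variable {g : ℝ → EuclideanSpace ℝ (Fin n)} {x : ℝ}

theorem norm_utang (h : deriv g x ≠ 0) : ‖utang g x‖ = 1 :=
  norm_smul_inv_norm h

theorem norm_deriv_smul_utang : ‖deriv g x‖ • utang g x = deriv g x := by
  by_cases h : deriv g x = 0
  · simp [utang, aderiv, h]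
  · exact smul_inv_smul₀ (norm_ne_zero_iff.2 h) _

theorem nperp_eq_of_eq_add_smul_utang {f : ℝ → EuclideanSpace ℝ (Fin n)}
    {w : EuclideanSpace ℝ (Fin n)} {c : ℝ} (hu : ‖utang g x‖ = 1) (hw : ⟪w, utang g x⟫ = 0)
    (hf : f x = w + c • utang g x) : nperp g f x = w := by
  simp only [nperp, hf, inner_add_left, real_inner_smul_left, hw, real_inner_self_eq_norm_sq, hu]
  simp

end Curve

section Family

variable {γ : ℝ → ℝ → EuclideanSpace ℝ (Fin n)} {t x : ℝ}

theorem aderivP_normalVel_eq_deriv_utang (hγ : ContDiff ℝ 2 (fun p : ℝ × ℝ => γ p.1 p.2))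
    (hne : deriv (γ t) x ≠ 0) (hφ : tanSpeed γ t x = 0)
    (horth : ⟪deriv (fun s => utang (γ s) x) t, utang (γ t) x⟫ = 0) :
    aderivP (γ t) (normalVel γ t) x = deriv (fun s => utang (γ s) x) t := by
  have hρ_t : DifferentiableAt ℝ (fun s => ‖deriv (γ s) x‖) t :=
    (differentiable_deriv_snd_left hγ x t).norm ℝ hne
  have hu_t : DifferentiableAt ℝ (fun s => utang (γ s) x) t :=
    (differentiable_deriv_snd_left hγ x t).inv_norm_smul hne
  have hu_x : DifferentiableAt ℝ (utang (γ t)) x :=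
    (differentiable_deriv_snd_right hγ t x).inv_norm_smul hne
  have hdt_x : DifferentiableAt ℝ (timeD γ t) x := differentiable_deriv_fst_right hγ t x
  have hφ_x : DifferentiableAt ℝ (tanSpeed γ t) x := hdt_x.inner ℝ hu_x
  have hmixed : deriv (timeD γ t) x = ‖deriv (γ t) x‖ • deriv (fun s => utang (γ s) x) t
      + deriv (fun s => ‖deriv (γ s) x‖) t • utang (γ t) x := by
    rw [show timeD γ t = fun y => deriv (fun s => γ s y) t from rfl, deriv_deriv_fst_comm hγ]
    rw [show (fun s => deriv (γ s) x) = fun s => ‖deriv (γ s) x‖ • utang (γ s) x from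
      funext fun s => (norm_deriv_smul_utang (g := γ s)).symm]
    exact (hρ_t.hasDerivAt.smul hu_t.hasDerivAt).deriv
  have hV : HasDerivAt (normalVel γ t)
      (deriv (timeD γ t) x - deriv (tanSpeed γ t) x • utang (γ t) x) x := by
    have h := hdt_x.hasDerivAt.sub (hφ_x.hasDerivAt.smul hu_x.hasDerivAt)
    rwa [hφ, zero_smul, zero_add] at h
  refine nperp_eq_of_eq_add_smul_utang (norm_utang hne) horth
    (c := ‖deriv (γ t) x‖⁻¹ * (deriv (fun s => ‖deriv (γ s) x‖) t - deriv (tanSpeed γ t) x)) ?_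
  rw [aderiv, hV.deriv, hmixed]
  match_scalars
  · field_simp
  · ring

theorem deriv_utang_eq_of_eqOn_Ico {T c : ℝ}
    {ξ : EuclideanSpace ℝ (Fin n) → EuclideanSpace ℝ (Fin n)} (htT : t < T)
    (hu : DifferentiableAt ℝ (fun s => utang (γ s) x) t)
    (hγx : DifferentiableAt ℝ (fun s => γ s x) t) (hξ : DifferentiableAt ℝ ξ (γ t x))
    (hb : ∀ s ∈ Ico t T, utang (γ s) x = c • ξ (γ s x)) :
    deriv (fun s => utang (γ s) x) t = c • fderiv ℝ ξ (γ t x) (timeD γ t x) :=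
  hu.hasDerivAt.eq_of_eqOn_Ico htT
    ((hξ.hasFDerivAt.comp_hasDerivAt t hγx.hasDerivAt).const_smul c) hb

end Family

theorem statement5_general
    (n : ℕ) (T : ℝ)
    (ξ : EuclideanSpace ℝ (Fin n) → EuclideanSpace ℝ (Fin n))
    (hξ : ContDiff ℝ (⊤ : ℕ∞) ξ)
    (τ : ℝ → ℝ)
    (γ : ℝ → ℝ → EuclideanSpace ℝ (Fin n))
    (hγ : ContDiff ℝ (⊤ : ℕ∞) (fun p : ℝ × ℝ => γ p.1 p.2))
    (himm : ∀ t ∈ Ico (0:ℝ) T, ∀ x ∈ Icc (-1:ℝ) 1, deriv (γ t) x ≠ 0)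
    (hb1 : ∀ t ∈ Ico (0:ℝ) T, ∀ x ∈ ({-1, 1} : Set ℝ),
      ⟪timeD γ t x, utang (γ t) x⟫ = 0)
    (hb2 : ∀ t ∈ Ico (0:ℝ) T, ∀ x ∈ ({-1, 1} : Set ℝ),
      utang (γ t) x = τ x • ξ (γ t x)) :
    ∀ t ∈ Ico (0:ℝ) T, ∀ x ∈ ({-1, 1} : Set ℝ),
      aderivP (γ t) (normalVel γ t) x
        = -(τ x • shapeOp ξ (γ t x) (normalVel γ t x)) := by
  intro t ht x hx
  have hxI : x ∈ Icc (-1:ℝ) 1 := by rcases hx with rfl | rfl <;> norm_num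
  have hγ2 : ContDiff ℝ 2 (fun p : ℝ × ℝ => γ p.1 p.2) :=
    hγ.of_le (ENat.natCast_le_of_coe_top_le_withTop le_rfl 2)
  have hlater : ∀ s ∈ Ico t T, s ∈ Ico (0:ℝ) T := fun s hs => ⟨ht.1.trans hs.1, hs.2⟩
  have hne : deriv (γ t) x ≠ 0 := himm t ht x hxI
  have hu : DifferentiableAt ℝ (fun s => utang (γ s) x) t :=
    (differentiable_deriv_snd_left hγ2 x t).inv_norm_smul hne
  have hdu : deriv (fun s => utang (γ s) x) t = τ x • fderiv ℝ ξ (γ t x) (timeD γ t x) :=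
    deriv_utang_eq_of_eqOn_Ico ht.2 hu
      ((hγ2.comp (contDiff_id.prodMk contDiff_const)).differentiable two_ne_zero t)
      (hξ.differentiable (by simp) _) fun s hs => hb2 s (hlater s hs) x hx
  have horth : ⟪deriv (fun s => utang (γ s) x) t, utang (γ t) x⟫ = 0 :=
    inner_eq_zero_of_hasDerivAt_of_norm_eq_one (u := fun s => utang (γ s) x) ht.2 hu.hasDerivAt
      fun s hs => norm_utang (himm s (hlater s hs) x hxI)
  have hV : normalVel γ t x = timeD γ t x := by
    simp [normalVel, tanSpeed, hb1 t ht x hx]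
  rw [aderivP_normalVel_eq_deriv_utang hγ2 hne (hb1 t ht x hx) horth, hdu, hV, shapeOp,
    smul_neg, neg_neg]

/-- the boundary relation `∂ₛ^⊥V = −τ₀ S_γ V` at the free boundary. -/
theorem statement5
    (n : ℕ) (hn : 2 ≤ n) (T : ℝ) (hT : 0 < T)
    (ξ : EuclideanSpace ℝ (Fin n) → EuclideanSpace ℝ (Fin n))
    (hξ : ContDiff ℝ (⊤ : ℕ∞) ξ)
    (τ : ℝ → ℝ) (hτ : ∀ x ∈ ({-1, 1} : Set ℝ), τ x = 1 ∨ τ x = -1)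
    (γ : ℝ → ℝ → EuclideanSpace ℝ (Fin n))
    (hγ : ContDiff ℝ (⊤ : ℕ∞) (fun p : ℝ × ℝ => γ p.1 p.2))
    (himm : ∀ t ∈ Ico (0:ℝ) T, ∀ x ∈ Icc (-1:ℝ) 1, deriv (γ t) x ≠ 0)
    (hb1 : ∀ t ∈ Ico (0:ℝ) T, ∀ x ∈ ({-1, 1} : Set ℝ),
      ⟪timeD γ t x, utang (γ t) x⟫ = 0)
    (hb2 : ∀ t ∈ Ico (0:ℝ) T, ∀ x ∈ ({-1, 1} : Set ℝ),
      utang (γ t) x = τ x • ξ (γ t x)) :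
    ∀ t ∈ Ico (0:ℝ) T, ∀ x ∈ ({-1, 1} : Set ℝ),
      aderivP (γ t) (normalVel γ t) x
        = -(τ x • shapeOp ξ (γ t x) (normalVel γ t x)) :=
  statement5_general n T ξ hξ τ γ hγ himm hb1 hb2

end
end

section
/- For every A > 0 there exists a function C: ℕ → (0,∞) such that: for all a_{−1}, a_{1} ∈ ℝ with |a_{−1}| ≤ A and |a_{1}| ≤ A, there exists a smooth diffeomorphism θ: [-1,1] → [-1,1] satisfying 1/2 ≤ θ' ≤ 3/2 on [-1,1], θ(±1) = ±1, θ'(±1) = 1, θ''(±1) = 0, θ'''(±1) = a_{±1}, and sup_{x∈[-1,1]} |θ^{(k)}(x)| ≤ C(k) for all k ∈ ℕ. -/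
open Set MeasureTheory Filter
open scoped RealInnerProductSpace

noncomputable section

variable {n : ℕ}

/-!
With `h x = x³ / 6 · ψ x` for a bump function `ψ` equal to `1` near `0`, take
`θ x = x + (a h (l (x + 1)) + b h (l (x - 1))) / l³`. For `l` large the two corrections live near
their own endpoint, and the rescaling `h (l ·) / l³` keeps the jet `(0, 0, 0, 1)` of `h` at `0`, so
`θ` has the prescribed jets at `±1`. The `k`-th derivative of the correction is `O(lᵏ⁻³)`: choosing
`l` depending on `A` only makes `|θ' - 1| ≤ 1/2`, so `θ` is an increasing bijection of `[-1, 1]`,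
and bounds every derivative uniformly in `|a|, |b| ≤ A`.
-/

open scoped ContDiff Topology

theorem StrictMonoOn.bijOn_Icc {α δ : Type*} [ConditionallyCompleteLinearOrder α]
    [TopologicalSpace α] [OrderTopology α] [DenselyOrdered α] [LinearOrder δ] [TopologicalSpace δ]
    [OrderClosedTopology δ] {f : α → δ} {a b : α} (hab : a ≤ b) (hf : StrictMonoOn f (Icc a b))
    (hc : ContinuousOn f (Icc a b)) : BijOn f (Icc a b) (Icc (f a) (f b)) :=
  ⟨fun _ hx => ⟨hf.monotoneOn (left_mem_Icc.2 hab) hx hx.1,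
      hf.monotoneOn hx (right_mem_Icc.2 hab) hx.2⟩,
    hf.injOn, intermediate_value_Icc hab hc⟩

section IteratedDeriv

variable {𝕜 F : Type*} [NontriviallyNormedField 𝕜] [NormedAddCommGroup F] [NormedSpace 𝕜 F]

theorem iteratedDeriv_eq_zero_of_notMem_tsupport {f : 𝕜 → F} {x : 𝕜} (hx : x ∉ tsupport f)
    (n : ℕ) : iteratedDeriv n f x = 0 := by
  rw [← norm_eq_zero, ← norm_iteratedFDeriv_eq_norm_iteratedDeriv, norm_eq_zero]
  exact Function.notMem_support.mp fun h => hx (support_iteratedFDeriv_subset n h)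

theorem HasCompactSupport.iteratedDeriv {f : 𝕜 → F} (hf : HasCompactSupport f) (n : ℕ) :
    HasCompactSupport (iteratedDeriv n f) := by
  induction n with
  | zero => simpa
  | succ n ih => simpa [iteratedDeriv_succ] using ih.deriv

theorem iteratedDeriv_comp_mul_add {f : 𝕜 → 𝕜} {n : ℕ} (hf : ContDiff 𝕜 n f) (l s x : 𝕜) :
    iteratedDeriv n (fun y => f (l * (y + s))) x = l ^ n * iteratedDeriv n f (l * (x + s)) := by
  rw [congrFun (iteratedDeriv_comp_add_const n (fun y => f (l * y)) s) x,
    iteratedDeriv_comp_const_mul hf l]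

end IteratedDeriv

theorem abs_iteratedDeriv_id_le_one {x : ℝ} (hx : x ∈ Icc (-1 : ℝ) 1) (k : ℕ) :
    |iteratedDeriv k (fun y : ℝ => y) x| ≤ 1 := by
  rw [iteratedDeriv_fun_id]
  split_ifs
  · exact abs_le.2 hx
  · simp
  · simp

section CubicBump

variable (ψ : ContDiffBump (0 : ℝ))

def cubicBump (x : ℝ) : ℝ := x ^ 3 / 6 * ψ x

theorem contDiff_cubicBump : ContDiff ℝ ∞ (cubicBump ψ) :=
  ((contDiff_id.pow 3).div_const 6).mul ψ.contDiff

theorem hasCompactSupport_cubicBump : HasCompactSupport (cubicBump ψ) :=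
  ψ.hasCompactSupport.mul_left (f := fun x : ℝ => x ^ 3 / 6)

theorem iteratedDeriv_cubicBump_zero (k : ℕ) :
    iteratedDeriv k (cubicBump ψ) 0 = if k = 3 then 1 else 0 := by
  have hcubic : cubicBump ψ =ᶠ[𝓝 0] fun x => x ^ 3 / 6 := by
    filter_upwards [ψ.eventuallyEq_one] with x hx
    simp [cubicBump, hx]
  rw [hcubic.iteratedDeriv_eq, iteratedDeriv_div_const, iteratedDeriv_fun_pow_zero]
  split_ifs <;> norm_num [Nat.factorial]

theorem iteratedDeriv_cubicBump_eq_zero {x : ℝ} (hx : ψ.rOut < |x|) (k : ℕ) :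
    iteratedDeriv k (cubicBump ψ) x = 0 := by
  refine iteratedDeriv_eq_zero_of_notMem_tsupport (fun h => ?_) k
  have : x ∈ tsupport ψ := tsupport_mul_subset_right (f := fun x : ℝ => x ^ 3 / 6) h
  rw [ψ.tsupport_eq, mem_closedBall_zero_iff, Real.norm_eq_abs] at this
  linarith

theorem exists_abs_iteratedDeriv_cubicBump_le (k : ℕ) :
    ∃ M, ∀ x, |iteratedDeriv k (cubicBump ψ) x| ≤ M :=
  Continuous.bounded_above_of_compact_support
    ((contDiff_cubicBump ψ).continuous_iteratedDeriv k (mod_cast le_top))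
    ((hasCompactSupport_cubicBump ψ).iteratedDeriv k)

end CubicBump

section BoundaryDiffeo

variable (ψ : ContDiffBump (0 : ℝ)) (l a b : ℝ)

def boundaryDiffeo (x : ℝ) : ℝ :=
  x + (a * cubicBump ψ (l * (x + 1)) + b * cubicBump ψ (l * (x - 1))) / l ^ 3

theorem contDiff_boundaryDiffeo : ContDiff ℝ ∞ (boundaryDiffeo ψ l a b) := by
  have := contDiff_cubicBump ψ
  unfold boundaryDiffeo
  fun_prop

theorem iteratedDeriv_boundaryDiffeo (k : ℕ) (x : ℝ) :
    iteratedDeriv k (boundaryDiffeo ψ l a b) x = iteratedDeriv k (fun y => y) x +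
      l ^ k / l ^ 3 * (a * iteratedDeriv k (cubicBump ψ) (l * (x + 1)) +
        b * iteratedDeriv k (cubicBump ψ) (l * (x - 1))) := by
  have h : ContDiff ℝ k (cubicBump ψ) := contDiff_infty.1 (contDiff_cubicBump ψ) k
  have hs (s : ℝ) : ContDiff ℝ k fun y => cubicBump ψ (l * (y + s)) := h.comp (by fun_prop)
  unfold boundaryDiffeo
  simp only [sub_eq_add_neg]
  rw [iteratedDeriv_fun_add (f := fun y => y) (by fun_prop)
      (((contDiff_const.mul (hs 1)).add (contDiff_const.mul (hs (-1)))).div_const _).contDiffAt,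
    iteratedDeriv_div_const, iteratedDeriv_fun_add (contDiff_const.mul (hs 1)).contDiffAt
      (contDiff_const.mul (hs (-1))).contDiffAt, iteratedDeriv_const_mul_field,
    iteratedDeriv_const_mul_field, iteratedDeriv_comp_mul_add h, iteratedDeriv_comp_mul_add h]
  ring

variable {l}

theorem iteratedDeriv_boundaryDiffeo_neg_one (hl : ψ.rOut < 2 * l) (k : ℕ) :
    iteratedDeriv k (boundaryDiffeo ψ l a b) (-1) =
      iteratedDeriv k (fun y => y) (-1) + if k = 3 then a else 0 := by
  have hl₀ : 0 < l := by linarith [ψ.rOut_pos]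
  rw [iteratedDeriv_boundaryDiffeo, show l * (-1 + 1) = 0 by ring,
    show l * (-1 - 1) = -(2 * l) by ring, iteratedDeriv_cubicBump_zero,
    iteratedDeriv_cubicBump_eq_zero ψ (by rwa [abs_neg, abs_of_pos (by positivity)])]
  split_ifs with hk <;> simp [hk, hl₀.ne']

theorem iteratedDeriv_boundaryDiffeo_one (hl : ψ.rOut < 2 * l) (k : ℕ) :
    iteratedDeriv k (boundaryDiffeo ψ l a b) 1 =
      iteratedDeriv k (fun y => y) 1 + if k = 3 then b else 0 := by
  have hl₀ : 0 < l := by linarith [ψ.rOut_pos]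
  rw [iteratedDeriv_boundaryDiffeo, show l * (1 + 1) = 2 * l by ring,
    show l * (1 - 1) = 0 by ring, iteratedDeriv_cubicBump_zero,
    iteratedDeriv_cubicBump_eq_zero ψ (by rwa [abs_of_pos (by positivity)])]
  split_ifs with hk <;> simp [hk, hl₀.ne']

theorem abs_iteratedDeriv_boundaryDiffeo_sub_le (hl : 0 < l) {k : ℕ} {M : ℝ}
    (hM : ∀ u, |iteratedDeriv k (cubicBump ψ) u| ≤ M) (x : ℝ) :
    |iteratedDeriv k (boundaryDiffeo ψ l a b) x - iteratedDeriv k (fun y => y) x| ≤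
      l ^ k / l ^ 3 * ((|a| + |b|) * M) := by
  rw [iteratedDeriv_boundaryDiffeo, add_sub_cancel_left, abs_mul, abs_of_pos (by positivity)]
  gcongr
  refine (abs_add_le _ _).trans ?_
  rw [abs_mul, abs_mul, add_mul]
  gcongr <;> exact hM _

theorem boundaryDiffeo_neg_one (hl : ψ.rOut < 2 * l) : boundaryDiffeo ψ l a b (-1) = -1 := by
  simpa using iteratedDeriv_boundaryDiffeo_neg_one ψ a b hl 0

theorem boundaryDiffeo_one (hl : ψ.rOut < 2 * l) : boundaryDiffeo ψ l a b 1 = 1 := by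
  simpa using iteratedDeriv_boundaryDiffeo_one ψ a b hl 0

theorem abs_deriv_boundaryDiffeo_sub_one_le (hl : 0 < l) {M : ℝ}
    (hM : ∀ u, |iteratedDeriv 1 (cubicBump ψ) u| ≤ M) (x : ℝ) :
    |deriv (boundaryDiffeo ψ l a b) x - 1| ≤ (|a| + |b|) * M / l ^ 2 := by
  have h := abs_iteratedDeriv_boundaryDiffeo_sub_le ψ a b hl hM x
  rwa [iteratedDeriv_one, iteratedDeriv_one, deriv_id'', pow_one,
    show l / l ^ 3 = (l ^ 2)⁻¹ by field_simp, inv_mul_eq_div] at h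

theorem abs_iteratedDeriv_boundaryDiffeo_le (hl : 0 < l) {k : ℕ} {M : ℝ}
    (hM : ∀ u, |iteratedDeriv k (cubicBump ψ) u| ≤ M) {x : ℝ} (hx : x ∈ Icc (-1 : ℝ) 1) :
    |iteratedDeriv k (boundaryDiffeo ψ l a b) x| ≤ 1 + l ^ k / l ^ 3 * ((|a| + |b|) * M) := by
  linarith [abs_sub_abs_le_abs_sub (iteratedDeriv k (boundaryDiffeo ψ l a b) x)
    (iteratedDeriv k (fun y => y) x), abs_iteratedDeriv_boundaryDiffeo_sub_le ψ a b hl hM x,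
    abs_iteratedDeriv_id_le_one hx k]

theorem bijOn_boundaryDiffeo (hl : ψ.rOut < 2 * l)
    (hmono : StrictMono (boundaryDiffeo ψ l a b)) :
    BijOn (boundaryDiffeo ψ l a b) (Icc (-1) 1) (Icc (-1) 1) := by
  have h := (hmono.strictMonoOn (Icc (-1) 1)).bijOn_Icc (by norm_num)
    (contDiff_boundaryDiffeo ψ l a b).continuous.continuousOn
  rwa [boundaryDiffeo_neg_one ψ a b hl, boundaryDiffeo_one ψ a b hl] at h

end BoundaryDiffeo

/-- construction of boundary-adapted diffeomorphisms (Lemma 3.4). -/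
theorem statement7 (A : ℝ) (hA : 0 < A) :
    ∃ C : ℕ → ℝ, (∀ k, 0 < C k) ∧
      ∀ am ap : ℝ, |am| ≤ A → |ap| ≤ A →
        ∃ θ : ℝ → ℝ,
          ContDiff ℝ (⊤ : ℕ∞) θ ∧
          Set.BijOn θ (Icc (-1:ℝ) 1) (Icc (-1:ℝ) 1) ∧
          (∀ x ∈ Icc (-1:ℝ) 1, 1/2 ≤ deriv θ x ∧ deriv θ x ≤ 3/2) ∧
          θ (-1) = -1 ∧ θ 1 = 1 ∧
          deriv θ (-1) = 1 ∧ deriv θ 1 = 1 ∧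
          iteratedDeriv 2 θ (-1) = 0 ∧ iteratedDeriv 2 θ 1 = 0 ∧
          iteratedDeriv 3 θ (-1) = am ∧ iteratedDeriv 3 θ 1 = ap ∧
          (∀ k : ℕ, ∀ x ∈ Icc (-1:ℝ) 1, |iteratedDeriv k θ x| ≤ C k) := by
  let ψ : ContDiffBump (0 : ℝ) := default
  choose M hM using exists_abs_iteratedDeriv_cubicBump_le ψ
  have hM₀ (k : ℕ) : 0 ≤ M k := (abs_nonneg _).trans (hM k 0)
  -- `ψ.rOut ≤ l` keeps each correction away from the other endpoint; `4 A M₁ ≤ l` and `1 ≤ l`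
  -- give `|θ' - 1| ≤ 2 A M₁ / l² ≤ 1/2`.
  set l := max 1 (max ψ.rOut (4 * A * M 1))
  have hl₁ : 1 ≤ l := le_max_left _ _
  have hl : ψ.rOut < 2 * l := by
    linarith [show ψ.rOut ≤ l from (le_max_left _ (4 * A * M 1)).trans (le_max_right _ _)]
  have hlM : 4 * A * M 1 ≤ l := (le_max_right _ _).trans (le_max_right _ _)
  refine ⟨fun k => 1 + l ^ k / l ^ 3 * (2 * A * M k), fun k => by have := hM₀ k; positivity,
    fun a b ha hb => ?_⟩
  have hab : |a| + |b| ≤ 2 * A := by linarith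
  have hderiv (x : ℝ) : |deriv (boundaryDiffeo ψ l a b) x - 1| ≤ 1 / 2 := by
    refine (abs_deriv_boundaryDiffeo_sub_one_le ψ a b (by positivity) (hM 1) x).trans ?_
    rw [div_le_iff₀ (by positivity)]
    nlinarith [mul_le_mul_of_nonneg_right hab (hM₀ 1)]
  have hneg := iteratedDeriv_boundaryDiffeo_neg_one ψ a b hl
  have hpos := iteratedDeriv_boundaryDiffeo_one ψ a b hl
  refine ⟨boundaryDiffeo ψ l a b, contDiff_boundaryDiffeo ψ l a b,
    bijOn_boundaryDiffeo ψ a b hl (strictMono_of_deriv_pos fun x => ?_),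
    fun x _ => ⟨?_, ?_⟩, boundaryDiffeo_neg_one ψ a b hl, boundaryDiffeo_one ψ a b hl,
    by simpa using hneg 1, by simpa using hpos 1,
    by simpa [iteratedDeriv_fun_id] using hneg 2, by simpa [iteratedDeriv_fun_id] using hpos 2,
    by simpa [iteratedDeriv_fun_id] using hneg 3, by simpa [iteratedDeriv_fun_id] using hpos 3,
    fun k x hx => (abs_iteratedDeriv_boundaryDiffeo_le ψ a b (by positivity) (hM k) hx).trans
      (by beta_reduce; gcongr; exact hM₀ k)⟩ <;>
  linarith [abs_le.1 (hderiv x)]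

end
end

section
/- Let γ ∈ C³([-1,1], ℝⁿ) be an immersion (∂_xγ ≠ 0 everywhere) and let A > 0 satisfy | −⟨∂_x³γ(x), ∂_xγ(x)⟩/|∂_xγ(x)|² + 3⟨∂_x²γ(x), ∂_xγ(x)⟩²/|∂_xγ(x)|⁴ | ≤ A for x ∈ {−1,1}. Then there exists a smooth diffeomorphism θ: [-1,1] → [-1,1] with θ(±1) = ±1, θ'(±1) = 1, θ''(±1) = 0, 1/2 ≤ θ' ≤ 3/2, and sup|θ^{(k)}| ≤ C(k,A) for all k ≥ 2 (with C(k,A) depending only on k and A), such that the reparametrization γ̃ = γ∘θ satisfies, at both endpoints x = ±1, ⟨ ∂_x³γ̃/|∂_xγ̃|³ − 3(⟨∂_x²γ̃, ∂_xγ̃⟩/|∂_xγ̃|⁵)∂_x²γ̃ , ∂_xγ̃ ⟩ = 0; i.e. the vector ∂_x³γ̃(±1)/|∂_xγ̃(±1)|³ − 3(⟨∂_x²γ̃(±1), ∂_xγ̃(±1)⟩/|∂_xγ̃(±1)|⁵)∂_x²γ̃(±1) is orthogonal to ∂_xγ̃(±1). -/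
open Set MeasureTheory Filter
open scoped RealInnerProductSpace

noncomputable section

variable {n : ℕ}

/-!
At an endpoint `r`, a reparametrization `θ` with `θ r = r`, `θ' r = 1`, `θ'' r = 0` leaves `γ'` and
`γ''` unchanged and adds `θ''' r • γ' r` to `γ'''` (Faà di Bruno). The boundary condition is then
linear in `θ''' r` and holds exactly when `θ''' r` equals the quantity `c_r` bounded by `A`.
Such a `θ` is `x + c₁ ψ(x) - c₋₁ ψ(-x)`, where `ψ` is the cubic `(x - 1)³ / 6` cut off at scale `ε`
near `1`, so that `|ψ⁽ᵏ⁾| ≤ ε³⁻ᵏ Mₖ` on `(-∞, 1]`. Taking `ε` small in terms of `A` alone keeps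
`θ'` within `1/2` of `1`, and gives `|θ⁽ᵏ⁾| ≤ 2A ε³⁻ᵏ Mₖ` for `k ≥ 2`.
-/

open Topology

def cubicCutoff (t : ℝ) : ℝ := t ^ 3 / 6 * Real.smoothTransition (t + 2)

theorem contDiff_cubicCutoff {N : ℕ∞} : ContDiff ℝ N cubicCutoff :=
  ((contDiff_id.pow 3).div_const 6).mul
    (Real.smoothTransition.contDiff.comp (contDiff_id.add contDiff_const))

theorem cubicCutoff_of_le {t : ℝ} (ht : t ≤ -2) : cubicCutoff t = 0 := by
  rw [cubicCutoff, Real.smoothTransition.zero_of_nonpos (by linarith), mul_zero]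

theorem cubicCutoff_of_ge {t : ℝ} (ht : -1 ≤ t) : cubicCutoff t = t ^ 3 / 6 := by
  rw [cubicCutoff, Real.smoothTransition.one_of_one_le (by linarith), mul_one]

theorem exists_bound_iteratedDeriv_cubicCutoff (k : ℕ) :
    ∃ M, ∀ t ≤ 0, |iteratedDeriv k cubicCutoff t| ≤ M := by
  obtain ⟨M, hM⟩ := (isCompact_Icc : IsCompact (Icc (-2 : ℝ) 0)).exists_bound_of_continuousOn
    ((contDiff_cubicCutoff (N := k)).continuous_iteratedDeriv k le_rfl).continuousOn
  refine ⟨M, fun t ht => ?_⟩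
  rcases lt_or_ge t (-2) with h | h
  · have hzero : cubicCutoff =ᶠ[𝓝 t] fun _ => 0 :=
      eventually_of_mem (Iio_mem_nhds h) fun s hs => cubicCutoff_of_le (le_of_lt hs)
    rw [hzero.iteratedDeriv_eq, iteratedDeriv_const, ite_self, abs_zero]
    exact (norm_nonneg _).trans (hM (-2) (by norm_num))
  · exact hM t ⟨h, ht⟩

def endBump (ε x : ℝ) : ℝ := ε ^ 3 * cubicCutoff (ε⁻¹ * (x - 1))

section Reparam

variable {ε : ℝ}

theorem contDiff_endBump {N : ℕ∞} : ContDiff ℝ N (endBump ε) :=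
  contDiff_const.mul
    (contDiff_cubicCutoff.comp (contDiff_const.mul (contDiff_id.sub contDiff_const)))

theorem iteratedDeriv_endBump (k : ℕ) (x : ℝ) :
    iteratedDeriv k (endBump ε) x =
      ε ^ 3 * ε⁻¹ ^ k * iteratedDeriv k cubicCutoff (ε⁻¹ * (x - 1)) := by
  have hscale := iteratedDeriv_comp_const_mul (contDiff_cubicCutoff (N := k)) ε⁻¹
  change iteratedDeriv k (fun x => ε ^ 3 * cubicCutoff (ε⁻¹ * (x - 1))) x = _
  rw [iteratedDeriv_const_mul_field, mul_assoc,
    iteratedDeriv_comp_sub_const (f := fun y => cubicCutoff (ε⁻¹ * y)), hscale]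

theorem abs_iteratedDeriv_endBump_le (hε : 0 < ε) {k : ℕ} {M : ℝ}
    (hM : ∀ t ≤ 0, |iteratedDeriv k cubicCutoff t| ≤ M) {x : ℝ} (hx : x ≤ 1) :
    |iteratedDeriv k (endBump ε) x| ≤ ε ^ 3 * ε⁻¹ ^ k * M := by
  rw [iteratedDeriv_endBump, abs_mul, abs_of_pos (by positivity)]
  exact mul_le_mul_of_nonneg_left
    (hM _ (mul_nonpos_of_nonneg_of_nonpos (by positivity) (by linarith))) (by positivity)

theorem endBump_eventuallyEq_one (hε : 0 < ε) :
    endBump ε =ᶠ[𝓝 1] fun x => (x - 1) ^ 3 / 6 := by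
  filter_upwards [Ioi_mem_nhds (by linarith : 1 - ε < 1)] with x hx
  have : -1 ≤ ε⁻¹ * (x - 1) := by
    rw [← div_eq_inv_mul, le_div_iff₀ hε]; linarith [mem_Ioi.mp hx]
  rw [endBump, cubicCutoff_of_ge this]
  field_simp

theorem endBump_eventuallyEq_neg_one (hε₀ : 0 < ε) (hε₁ : ε < 1) :
    endBump ε =ᶠ[𝓝 (-1)] fun _ => 0 := by
  filter_upwards [Iio_mem_nhds (by linarith : -1 < 1 - 2 * ε)] with x hx
  have : ε⁻¹ * (x - 1) ≤ -2 := by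
    rw [← div_eq_inv_mul, div_le_iff₀ hε₀]; linarith [mem_Iio.mp hx]
  rw [endBump, cubicCutoff_of_le this, mul_zero]

theorem iteratedDeriv_endBump_one (hε : 0 < ε) (k : ℕ) :
    iteratedDeriv k (endBump ε) 1 = if k = 3 then 1 else 0 := by
  rw [(endBump_eventuallyEq_one hε).iteratedDeriv_eq, iteratedDeriv_div_const,
    iteratedDeriv_comp_sub_const (f := fun y : ℝ => y ^ 3)]
  beta_reduce
  rw [sub_self, iteratedDeriv_fun_pow_zero]
  split_ifs <;> norm_num [Nat.factorial]

theorem iteratedDeriv_endBump_neg_one (hε₀ : 0 < ε) (hε₁ : ε < 1) (k : ℕ) :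
    iteratedDeriv k (endBump ε) (-1) = 0 := by
  rw [(endBump_eventuallyEq_neg_one hε₀ hε₁).iteratedDeriv_eq, iteratedDeriv_const, ite_self]

def reparam (ε b c x : ℝ) : ℝ := x + (b * endBump ε x - c * endBump ε (-x))

variable {b c : ℝ}

theorem contDiff_reparam {N : ℕ∞} : ContDiff ℝ N (reparam ε b c) :=
  contDiff_id.add ((contDiff_const.mul contDiff_endBump).sub
    (contDiff_const.mul (contDiff_endBump.comp contDiff_neg)))

theorem iteratedDeriv_reparam (k : ℕ) (x : ℝ) :
    iteratedDeriv k (reparam ε b c) x = iteratedDeriv k (fun y => y) x +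
      (b * iteratedDeriv k (endBump ε) x - c * ((-1) ^ k * iteratedDeriv k (endBump ε) (-x))) := by
  change iteratedDeriv k (fun x => x + (b * endBump ε x - c * endBump ε (-x))) x = _
  have hid : ContDiff ℝ k fun y : ℝ => y := contDiff_id
  have hpos : ContDiff ℝ k fun y => b * endBump ε y := contDiff_const.mul contDiff_endBump
  have hneg : ContDiff ℝ k fun y => c * endBump ε (-y) :=
    contDiff_const.mul (contDiff_endBump.comp contDiff_neg)
  rw [iteratedDeriv_fun_add hid.contDiffAt (hpos.sub hneg).contDiffAt,
    iteratedDeriv_fun_sub hpos.contDiffAt hneg.contDiffAt,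
    iteratedDeriv_const_mul_field, iteratedDeriv_const_mul_field,
    iteratedDeriv_comp_neg (f := endBump ε), smul_eq_mul]

theorem iteratedDeriv_reparam_one (hε₀ : 0 < ε) (hε₁ : ε < 1) (k : ℕ) :
    iteratedDeriv k (reparam ε b c) 1 =
      iteratedDeriv k (fun y => y) 1 + if k = 3 then b else 0 := by
  rw [iteratedDeriv_reparam, iteratedDeriv_endBump_one hε₀, iteratedDeriv_endBump_neg_one hε₀ hε₁]
  split_ifs <;> ring

theorem iteratedDeriv_reparam_neg_one (hε₀ : 0 < ε) (hε₁ : ε < 1) (k : ℕ) :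
    iteratedDeriv k (reparam ε b c) (-1) =
      iteratedDeriv k (fun y => y) (-1) + if k = 3 then c else 0 := by
  rw [iteratedDeriv_reparam, neg_neg, iteratedDeriv_endBump_one hε₀,
    iteratedDeriv_endBump_neg_one hε₀ hε₁]
  split_ifs with h <;> norm_num [h]

theorem third_order_jet_of_iteratedDeriv {f : ℝ → ℝ} {r C : ℝ}
    (hf : ∀ k, iteratedDeriv k f r = iteratedDeriv k (fun y => y) r + if k = 3 then C else 0) :
    f r = r ∧ deriv f r = 1 ∧ iteratedDeriv 2 f r = 0 ∧ iteratedDeriv 3 f r = C := by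
  refine ⟨by simpa using hf 0, by simpa [iteratedDeriv_fun_id] using hf 1,
    by simpa [iteratedDeriv_fun_id] using hf 2, by simpa [iteratedDeriv_fun_id] using hf 3⟩

theorem abs_iteratedDeriv_reparam_sub_le (hε : 0 < ε) {k : ℕ} {A M : ℝ}
    (hM : ∀ t ≤ 0, |iteratedDeriv k cubicCutoff t| ≤ M) (hb : |b| ≤ A) (hc : |c| ≤ A)
    {x : ℝ} (hx : x ∈ Icc (-1) 1) :
    |iteratedDeriv k (reparam ε b c) x - iteratedDeriv k (fun y => y) x| ≤
      2 * A * (ε ^ 3 * ε⁻¹ ^ k * M) := by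
  have hpos := abs_iteratedDeriv_endBump_le hε hM hx.2
  have hneg := abs_iteratedDeriv_endBump_le hε hM (neg_le.mp hx.1)
  rw [iteratedDeriv_reparam, add_sub_cancel_left]
  calc |b * iteratedDeriv k (endBump ε) x - c * ((-1) ^ k * iteratedDeriv k (endBump ε) (-x))|
      ≤ |b| * |iteratedDeriv k (endBump ε) x| + |c| * |iteratedDeriv k (endBump ε) (-x)| := by
        refine (abs_sub _ _).trans_eq ?_
        simp [abs_mul]
    _ ≤ A * (ε ^ 3 * ε⁻¹ ^ k * M) + A * (ε ^ 3 * ε⁻¹ ^ k * M) := by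
        have hA : 0 ≤ A := (abs_nonneg b).trans hb
        gcongr
    _ = 2 * A * (ε ^ 3 * ε⁻¹ ^ k * M) := by ring

end Reparam

theorem bijOn_Icc_self_of_deriv_pos {f : ℝ → ℝ} {a b : ℝ} (hab : a ≤ b)
    (hf : ContinuousOn f (Icc a b)) (hf' : ∀ x ∈ Ioo a b, 0 < deriv f x)
    (ha : f a = a) (hb : f b = b) : BijOn f (Icc a b) (Icc a b) := by
  have hmono : StrictMonoOn f (Icc a b) :=
    strictMonoOn_of_deriv_pos (convex_Icc a b) hf (by rwa [interior_Icc])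
  refine ⟨fun x hx => ?_, hmono.injOn, ?_⟩
  · exact ⟨ha ▸ hmono.monotoneOn (left_mem_Icc.mpr hab) hx hx.1,
      hb ▸ hmono.monotoneOn hx (right_mem_Icc.mpr hab) hx.2⟩
  · have := intermediate_value_Icc hab hf
    rwa [ha, hb] at this

theorem exists_reparam_third_derivative {A : ℝ} (hA : 0 ≤ A) :
    ∃ C : ℕ → ℝ, ∀ b c : ℝ, |b| ≤ A → |c| ≤ A → ∃ θ : ℝ → ℝ,
      ContDiff ℝ (⊤ : ℕ∞) θ ∧ BijOn θ (Icc (-1) 1) (Icc (-1) 1) ∧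
      θ (-1) = -1 ∧ deriv θ (-1) = 1 ∧ iteratedDeriv 2 θ (-1) = 0 ∧ iteratedDeriv 3 θ (-1) = c ∧
      θ 1 = 1 ∧ deriv θ 1 = 1 ∧ iteratedDeriv 2 θ 1 = 0 ∧ iteratedDeriv 3 θ 1 = b ∧
      (∀ x ∈ Icc (-1 : ℝ) 1, 1 / 2 ≤ deriv θ x ∧ deriv θ x ≤ 3 / 2) ∧
      ∀ k, 2 ≤ k → ∀ x ∈ Icc (-1 : ℝ) 1, |iteratedDeriv k θ x| ≤ C k := by
  choose M hM using exists_bound_iteratedDeriv_cubicCutoff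
  have hM₁ : 0 ≤ M 1 := (abs_nonneg _).trans (hM 1 0 le_rfl)
  set ε := 1 / (4 * A * M 1 + 2)
  have hε₀ : 0 < ε := by positivity
  have hε₁ : ε < 1 := by rw [div_lt_one (by positivity)]; nlinarith
  have hsmall : 2 * A * (ε ^ 3 * ε⁻¹ ^ 1 * M 1) ≤ 1 / 2 := by
    have hε : ε ^ 3 * ε⁻¹ ^ 1 = 1 / (4 * A * M 1 + 2) ^ 2 := by
      simp only [ε]; field_simp
    rw [hε, ← mul_assoc, mul_one_div, div_mul_eq_mul_div, div_le_iff₀ (by positivity)]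
    nlinarith [mul_nonneg hA hM₁]
  refine ⟨fun k => 2 * A * (ε ^ 3 * ε⁻¹ ^ k * M k), fun b c hb hc => ?_⟩
  obtain ⟨hl₀, hl₁, hl₂, hl₃⟩ :=
    third_order_jet_of_iteratedDeriv (iteratedDeriv_reparam_neg_one (b := b) (c := c) hε₀ hε₁)
  obtain ⟨hr₀, hr₁, hr₂, hr₃⟩ :=
    third_order_jet_of_iteratedDeriv (iteratedDeriv_reparam_one (b := b) (c := c) hε₀ hε₁)
  have hderiv : ∀ x ∈ Icc (-1 : ℝ) 1, |deriv (reparam ε b c) x - 1| ≤ 1 / 2 := fun x hx => by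
    simpa [iteratedDeriv_fun_id] using
      (abs_iteratedDeriv_reparam_sub_le hε₀ (hM 1) hb hc hx).trans hsmall
  have hderiv' : ∀ x ∈ Icc (-1 : ℝ) 1, 1 / 2 ≤ deriv (reparam ε b c) x ∧
      deriv (reparam ε b c) x ≤ 3 / 2 := fun x hx => by
    constructor <;> linarith [abs_le.mp (hderiv x hx)]
  refine ⟨reparam ε b c, contDiff_reparam, ?_, hl₀, hl₁, hl₂, hl₃, hr₀, hr₁, hr₂, hr₃, hderiv',
    fun k hk x hx => ?_⟩
  · refine bijOn_Icc_self_of_deriv_pos (by norm_num)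
      (contDiff_reparam (N := 0)).continuous.continuousOn (fun x hx => ?_) hl₀ hr₀
    linarith [(hderiv' x (Ioo_subset_Icc_self hx)).1]
  · have hid : iteratedDeriv k (fun y : ℝ => y) x = 0 := by
      simp [iteratedDeriv_fun_id, show k ≠ 0 by omega, show k ≠ 1 by omega]
    simpa [hid] using abs_iteratedDeriv_reparam_sub_le hε₀ (hM k) hb hc hx

section ChainRule

variable {F : Type*} [NormedAddCommGroup F] [NormedSpace ℝ F] {f : ℝ → F} {N : ℕ∞}

theorem hasDerivAt_iteratedDeriv (hf : ContDiff ℝ N f) {m : ℕ} (hm : m < N) (x : ℝ) :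
    HasDerivAt (iteratedDeriv m f) (iteratedDeriv (m + 1) f x) x := by
  rw [iteratedDeriv_succ]
  exact (hf.differentiable_iteratedDeriv m (by exact_mod_cast hm) x).hasDerivAt

variable {γ : ℝ → F} {θ : ℝ → ℝ}

theorem iteratedDeriv_one_comp (hγ : ContDiff ℝ 1 γ) (hθ : ContDiff ℝ 1 θ) :
    iteratedDeriv 1 (γ ∘ θ) = fun x => deriv θ x • deriv γ (θ x) := by
  funext x
  rw [iteratedDeriv_one]
  exact ((hγ.differentiable one_ne_zero _).hasDerivAt.scomp x
    (hθ.differentiable one_ne_zero x).hasDerivAt).deriv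

theorem iteratedDeriv_two_comp (hγ : ContDiff ℝ 2 γ) (hθ : ContDiff ℝ 2 θ) :
    iteratedDeriv 2 (γ ∘ θ) = fun x =>
      iteratedDeriv 2 θ x • deriv γ (θ x) + deriv θ x ^ 2 • iteratedDeriv 2 γ (θ x) := by
  funext x
  rw [iteratedDeriv_succ, iteratedDeriv_one_comp (hγ.of_le (by norm_num)) (hθ.of_le (by norm_num))]
  have hθ₁ : HasDerivAt θ (deriv θ x) x := (hθ.differentiable (by norm_num) x).hasDerivAt
  have hθ₂ : HasDerivAt (iteratedDeriv 1 θ) (iteratedDeriv 2 θ x) x :=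
    hasDerivAt_iteratedDeriv hθ (by norm_num) x
  have hγ₂ : HasDerivAt (iteratedDeriv 1 γ) (iteratedDeriv 2 γ (θ x)) (θ x) :=
    hasDerivAt_iteratedDeriv hγ (by norm_num) (θ x)
  rw [iteratedDeriv_one] at hθ₂ hγ₂
  refine (hθ₂.smul (hγ₂.scomp x hθ₁)).deriv.trans ?_
  simp only [Function.comp_apply]
  module

theorem iteratedDeriv_three_comp (hγ : ContDiff ℝ 3 γ) (hθ : ContDiff ℝ 3 θ) (x : ℝ) :
    iteratedDeriv 3 (γ ∘ θ) x = iteratedDeriv 3 θ x • deriv γ (θ x) +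
      (3 * deriv θ x * iteratedDeriv 2 θ x) • iteratedDeriv 2 γ (θ x) +
      deriv θ x ^ 3 • iteratedDeriv 3 γ (θ x) := by
  rw [iteratedDeriv_succ, iteratedDeriv_two_comp (hγ.of_le (by norm_num)) (hθ.of_le (by norm_num))]
  have hθ₁ : HasDerivAt θ (deriv θ x) x := (hθ.differentiable (by norm_num) x).hasDerivAt
  have hθ₂ : HasDerivAt (iteratedDeriv 1 θ) (iteratedDeriv 2 θ x) x :=
    hasDerivAt_iteratedDeriv hθ (by norm_num) x
  have hθ₃ : HasDerivAt (iteratedDeriv 2 θ) (iteratedDeriv 3 θ x) x :=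
    hasDerivAt_iteratedDeriv hθ (by norm_num) x
  have hγ₂ : HasDerivAt (iteratedDeriv 1 γ) (iteratedDeriv 2 γ (θ x)) (θ x) :=
    hasDerivAt_iteratedDeriv hγ (by norm_num) (θ x)
  have hγ₃ : HasDerivAt (iteratedDeriv 2 γ) (iteratedDeriv 3 γ (θ x)) (θ x) :=
    hasDerivAt_iteratedDeriv hγ (by norm_num) (θ x)
  rw [iteratedDeriv_one] at hθ₂ hγ₂
  refine ((hθ₃.smul (hγ₂.scomp x hθ₁)).add ((hθ₂.pow 2).smul (hγ₃.scomp x hθ₁))).deriv.trans ?_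
  simp only [Function.comp_apply, Pi.pow_apply]
  module

end ChainRule

theorem thirdOrder_boundary_condition_comp {E : Type*} [NormedAddCommGroup E]
    [InnerProductSpace ℝ E] {γ : ℝ → E} {θ : ℝ → ℝ} {x : ℝ}
    (hγ : ContDiff ℝ 3 γ) (hθ : ContDiff ℝ 3 θ) (hγx : deriv γ x ≠ 0)
    (h₀ : θ x = x) (h₁ : deriv θ x = 1) (h₂ : iteratedDeriv 2 θ x = 0)
    (h₃ : iteratedDeriv 3 θ x = -(⟪iteratedDeriv 3 γ x, deriv γ x⟫ / ‖deriv γ x‖ ^ 2)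
      + 3 * ⟪iteratedDeriv 2 γ x, deriv γ x⟫ ^ 2 / ‖deriv γ x‖ ^ 4) :
    ⟪(‖deriv (γ ∘ θ) x‖ ^ 3)⁻¹ • iteratedDeriv 3 (γ ∘ θ) x
        - (3 * ⟪iteratedDeriv 2 (γ ∘ θ) x, deriv (γ ∘ θ) x⟫
            / ‖deriv (γ ∘ θ) x‖ ^ 5) • iteratedDeriv 2 (γ ∘ θ) x,
      deriv (γ ∘ θ) x⟫ = 0 := by
  have hd₁ : deriv (γ ∘ θ) x = deriv γ x := by
    rw [← iteratedDeriv_one, iteratedDeriv_one_comp (hγ.of_le (by norm_num))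
      (hθ.of_le (by norm_num))]
    simp [h₀, h₁]
  have hd₂ : iteratedDeriv 2 (γ ∘ θ) x = iteratedDeriv 2 γ x := by
    rw [iteratedDeriv_two_comp (hγ.of_le (by norm_num)) (hθ.of_le (by norm_num))]
    simp [h₀, h₁, h₂]
  have hd₃ : iteratedDeriv 3 (γ ∘ θ) x = iteratedDeriv 3 θ x • deriv γ x + iteratedDeriv 3 γ x := by
    rw [iteratedDeriv_three_comp hγ hθ]
    simp [h₀, h₁, h₂]
  have hnorm : ‖deriv γ x‖ ≠ 0 := norm_ne_zero_iff.mpr hγx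
  rw [hd₁, hd₂, hd₃, h₃, inner_sub_left, real_inner_smul_left, real_inner_smul_left,
    inner_add_left, real_inner_smul_left, real_inner_self_eq_norm_sq]
  field_simp
  ring

theorem statement8_general
    (n : ℕ) (A : ℝ) (hA : 0 < A) :
    ∃ C : ℕ → ℝ,
      ∀ γ : ℝ → EuclideanSpace ℝ (Fin n),
        ContDiff ℝ 3 γ →
        (∀ x ∈ Icc (-1:ℝ) 1, deriv γ x ≠ 0) →
        (∀ x ∈ ({-1, 1} : Set ℝ),
          |(-(⟪iteratedDeriv 3 γ x, deriv γ x⟫ / ‖deriv γ x‖ ^ 2))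
            + 3 * ⟪iteratedDeriv 2 γ x, deriv γ x⟫ ^ 2 / ‖deriv γ x‖ ^ 4| ≤ A) →
        ∃ θ : ℝ → ℝ,
          ContDiff ℝ (⊤ : ℕ∞) θ ∧
          Set.BijOn θ (Icc (-1:ℝ) 1) (Icc (-1:ℝ) 1) ∧
          θ (-1) = -1 ∧ θ 1 = 1 ∧
          deriv θ (-1) = 1 ∧ deriv θ 1 = 1 ∧
          iteratedDeriv 2 θ (-1) = 0 ∧ iteratedDeriv 2 θ 1 = 0 ∧
          (∀ x ∈ Icc (-1:ℝ) 1, 1/2 ≤ deriv θ x ∧ deriv θ x ≤ 3/2) ∧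
          (∀ k : ℕ, 2 ≤ k → ∀ x ∈ Icc (-1:ℝ) 1, |iteratedDeriv k θ x| ≤ C k) ∧
          (∀ x ∈ ({-1, 1} : Set ℝ),
            ⟪(‖deriv (γ ∘ θ) x‖ ^ 3)⁻¹ • iteratedDeriv 3 (γ ∘ θ) x
                - (3 * ⟪iteratedDeriv 2 (γ ∘ θ) x, deriv (γ ∘ θ) x⟫
                    / ‖deriv (γ ∘ θ) x‖ ^ 5) • iteratedDeriv 2 (γ ∘ θ) x,
              deriv (γ ∘ θ) x⟫ = 0) := by
  obtain ⟨C, hC⟩ := exists_reparam_third_derivative hA.le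
  refine ⟨C, fun γ hγ himm hbound => ?_⟩
  obtain ⟨θ, hθ, hbij, hl₀, hl₁, hl₂, hl₃, hr₀, hr₁, hr₂, hr₃, hθ', hθk⟩ :=
    hC _ _ (hbound 1 (by simp)) (hbound (-1) (by simp))
  refine ⟨θ, hθ, hbij, hl₀, hr₀, hl₁, hr₁, hl₂, hr₂, hθ', hθk, ?_⟩
  rintro x (rfl | rfl)
  · exact thirdOrder_boundary_condition_comp hγ (contDiff_infty.mp hθ 3) (himm _ (by norm_num))
      hl₀ hl₁ hl₂ hl₃
  · exact thirdOrder_boundary_condition_comp hγ (contDiff_infty.mp hθ 3) (himm _ (by norm_num))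
      hr₀ hr₁ hr₂ hr₃

/-- reparametrization to the analytic third-order boundary condition
(Proposition 3.3(b)). -/
theorem statement8
    (n : ℕ) (hn : 2 ≤ n) (A : ℝ) (hA : 0 < A) :
    ∃ C : ℕ → ℝ,
      ∀ γ : ℝ → EuclideanSpace ℝ (Fin n),
        ContDiff ℝ 3 γ →
        (∀ x ∈ Icc (-1:ℝ) 1, deriv γ x ≠ 0) →
        (∀ x ∈ ({-1, 1} : Set ℝ),
          |(-(⟪iteratedDeriv 3 γ x, deriv γ x⟫ / ‖deriv γ x‖ ^ 2))
            + 3 * ⟪iteratedDeriv 2 γ x, deriv γ x⟫ ^ 2 / ‖deriv γ x‖ ^ 4| ≤ A) →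
        ∃ θ : ℝ → ℝ,
          ContDiff ℝ (⊤ : ℕ∞) θ ∧
          Set.BijOn θ (Icc (-1:ℝ) 1) (Icc (-1:ℝ) 1) ∧
          θ (-1) = -1 ∧ θ 1 = 1 ∧
          deriv θ (-1) = 1 ∧ deriv θ 1 = 1 ∧
          iteratedDeriv 2 θ (-1) = 0 ∧ iteratedDeriv 2 θ 1 = 0 ∧
          (∀ x ∈ Icc (-1:ℝ) 1, 1/2 ≤ deriv θ x ∧ deriv θ x ≤ 3/2) ∧
          (∀ k : ℕ, 2 ≤ k → ∀ x ∈ Icc (-1:ℝ) 1, |iteratedDeriv k θ x| ≤ C k) ∧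
          (∀ x ∈ ({-1, 1} : Set ℝ),
            ⟪(‖deriv (γ ∘ θ) x‖ ^ 3)⁻¹ • iteratedDeriv 3 (γ ∘ θ) x
                - (3 * ⟪iteratedDeriv 2 (γ ∘ θ) x, deriv (γ ∘ θ) x⟫
                    / ‖deriv (γ ∘ θ) x‖ ^ 5) • iteratedDeriv 2 (γ ∘ θ) x,
              deriv (γ ∘ θ) x⟫ = 0) :=
  statement8_general n A hA

end
end
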